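/- arXiv:2002.07342 — 9 statements merged into one kernel-verified Lean document; each statement's English description precedes it below -/
import Mathlib

section
/- For every n ≥ 4 and every r with 1 ≤ r ≤ n−3, the arrangement K_{r,n} can be transformed into K_{r+1,n} in exactly 3r−2 LRE moves; that is, there exist g_1, …, g_{3r−2} ∈ G with K_{r,n} ∘ g_1 ∘ ⋯ ∘ g_{3r−2} = K_{r+1,n}. -/
/-!
Write `r = k + 1`. The word is `σ^k (τσ⁻¹)^k τ`, of length `k + 2k + 1 = 3r - 2`.
Rotating `K_{r,n}` left `k` times gives `(n, n-r, n-r-1, …, 1, n-r+1, …, n-1)`. The product `τσ⁻¹`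
fixes the second position and rotates the other `n - 1` positions one step to the right, so
`(τσ⁻¹)^k` keeps `n-r` in second position and brings the block `n-r+1, …, n` back to the front:
`(n-r+1, n-r, n-r+2, …, n, n-r-1, …, 1)`. A final exchange gives `K_{r+1,n}`.
-/

open Equiv

namespace LRE

variable {n : ℕ}

def IsLeftRotation (σ : Perm (Fin n)) : Prop :=
  ∀ i : Fin n, (σ i : ℕ) = ((i : ℕ) + 1) % n

def IsExchange (τ : Perm (Fin n)) : Prop :=
  ∀ i : Fin n, (τ i : ℕ) = if (i : ℕ) = 0 then 1 else if (i : ℕ) = 1 then 0 else (i : ℕ)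

def IsKArrangement (r : ℕ) (K : Perm (Fin n)) : Prop :=
  ∀ i : Fin n, (K i : ℕ) = if (i : ℕ) < r then n - r + (i : ℕ) else n - 1 - (i : ℕ)

namespace IsLeftRotation

variable {σ : Perm (Fin n)}

theorem val_pow_apply (hσ : IsLeftRotation σ) (m : ℕ) (i : Fin n) :
    ((σ ^ m) i : ℕ) = ((i : ℕ) + m) % n := by
  induction m generalizing i with
  | zero => simp [Nat.mod_eq_of_lt i.isLt]
  | succ m ih =>
    rw [pow_succ, Perm.mul_apply, ih, hσ, Nat.mod_add_mod, add_right_comm, add_assoc]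

theorem val_inv_apply (hσ : IsLeftRotation σ) (i : Fin n) :
    (σ⁻¹ i : ℕ) = if (i : ℕ) = 0 then n - 1 else (i : ℕ) - 1 := by
  have h := hσ (σ⁻¹ i)
  rw [show σ (σ⁻¹ i) = i from σ.apply_symm_apply i] at h
  have := (σ⁻¹ i).isLt
  obtain hc | hc := Nat.lt_or_ge ((σ⁻¹ i : ℕ) + 1) n
  · rw [Nat.mod_eq_of_lt hc] at h
    split_ifs <;> omega
  · rw [show (σ⁻¹ i : ℕ) + 1 = n by omega, Nat.mod_self] at h
    rw [if_pos h]
    omega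

end IsLeftRotation

variable {σ τ : Perm (Fin n)}

theorem val_exchange_mul_inv_apply (hσ : IsLeftRotation σ) (hτ : IsExchange τ) (hn : 3 ≤ n)
    (i : Fin n) :
    ((τ * σ⁻¹) i : ℕ) =
      if (i : ℕ) = 0 then n - 1 else if (i : ℕ) = 1 then 1 else if (i : ℕ) = 2 then 0
      else (i : ℕ) - 1 := by
  have hτv := hτ (σ⁻¹ i)
  have hσv := hσ.val_inv_apply i
  have := (τ (σ⁻¹ i)).isLt
  rw [Perm.mul_apply]
  split_ifs at hτv hσv ⊢ <;> omega

theorem val_exchange_mul_inv_pow_apply (hσ : IsLeftRotation σ) (hτ : IsExchange τ) {k : ℕ}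
    (hk : k + 2 ≤ n) (i : Fin n) :
    (((τ * σ⁻¹) ^ k) i : ℕ) =
      if (i : ℕ) = 1 then 1
      else if (i : ℕ) = 0 then (if k = 0 then 0 else n - k)
      else if (i : ℕ) = k + 1 then 0
      else if (i : ℕ) ≤ k then n - 1 - k + (i : ℕ)
      else (i : ℕ) - k := by
  induction k generalizing i with
  | zero => simp only [pow_zero, Perm.one_apply]; split_ifs <;> omega
  | succ k ih =>
    have := i.isLt
    have := ((τ * σ⁻¹) i).isLt
    have hstep := val_exchange_mul_inv_apply hσ hτ (by omega) i
    rw [pow_succ, Perm.mul_apply, ih (by omega), if_neg k.succ_ne_zero]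
    split_ifs at hstep ⊢ <;> omega

theorem val_K_mul_pow_apply {K : Perm (Fin n)} {k : ℕ} (hσ : IsLeftRotation σ)
    (hK : IsKArrangement (k + 1) K) (hk : k + 1 ≤ n) (i : Fin n) :
    ((K * σ ^ k) i : ℕ) =
      if (i : ℕ) = 0 then n - 1 else if (i : ℕ) + k < n then n - 1 - k - (i : ℕ)
      else (i : ℕ) - 1 := by
  have := i.isLt
  rw [Perm.mul_apply, hK, hσ.val_pow_apply]
  obtain hc | hc := Nat.lt_or_ge ((i : ℕ) + k) n
  · rw [Nat.mod_eq_of_lt hc]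
    split_ifs <;> omega
  · rw [Nat.mod_eq_sub_mod hc, Nat.mod_eq_of_lt (by omega)]
    split_ifs <;> omega

theorem K_mul_word_eq {K K' : Perm (Fin n)} {k : ℕ} (hσ : IsLeftRotation σ) (hτ : IsExchange τ)
    (hK : IsKArrangement (k + 1) K) (hK' : IsKArrangement (k + 2) K') (hk : k + 2 ≤ n) :
    K * (σ ^ k * ((τ * σ⁻¹) ^ k * τ)) = K' := by
  ext i
  have := i.isLt
  have hτi := hτ i
  have hP := val_exchange_mul_inv_pow_apply hσ hτ hk (τ i)
  have := (((τ * σ⁻¹) ^ k) (τ i)).isLt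
  rw [← mul_assoc, Perm.mul_apply, val_K_mul_pow_apply hσ hK (by omega), Perm.mul_apply, hK']
  split_ifs at hτi hP ⊢ <;> omega

end LRE

theorem K_step_three_r_sub_two_general (n r : ℕ) (hr1 : 1 ≤ r) (hr : r ≤ n - 3)
    (σ τ Kr Kr1 : Equiv.Perm (Fin n))
    (hσ : ∀ i : Fin n, (σ i : ℕ) = ((i : ℕ) + 1) % n)
    (hτ : ∀ i : Fin n, (τ i : ℕ) =
      if (i : ℕ) = 0 then 1 else if (i : ℕ) = 1 then 0 else (i : ℕ))
    (hKr : ∀ i : Fin n, (Kr i : ℕ) =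
      if (i : ℕ) < r then n - r + (i : ℕ) else n - 1 - (i : ℕ))
    (hKr1 : ∀ i : Fin n, (Kr1 i : ℕ) =
      if (i : ℕ) < r + 1 then n - (r + 1) + (i : ℕ) else n - 1 - (i : ℕ)) :
    ∃ gs : List (Equiv.Perm (Fin n)),
      gs.length = 3 * r - 2 ∧
      (∀ g ∈ gs, g = σ ∨ g = σ⁻¹ ∨ g = τ) ∧
      Kr * gs.prod = Kr1 := by
  obtain ⟨k, rfl⟩ := Nat.exists_eq_add_of_le' hr1
  refine ⟨List.replicate k σ ++ ((List.replicate k [τ, σ⁻¹]).flatten ++ [τ]), ?_, ?_, ?_⟩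
  · simp only [List.length_append, List.length_replicate, List.length_flatten,
      List.map_replicate, List.length_cons, List.length_nil, List.sum_replicate, smul_eq_mul]
    omega
  · simp only [List.mem_append, List.mem_replicate, List.mem_flatten, List.mem_cons,
      List.not_mem_nil]
    aesop
  · simpa [List.prod_flatten] using
      LRE.K_mul_word_eq hσ hτ hKr hKr1 (by omega)

/-- For every `n ≥ 4` and `1 ≤ r ≤ n - 3`, the arrangement `K_{r,n}` can be transformed
into `K_{r+1,n}` in exactly `3r - 2` LRE moves.  Permutations of `{1,…,n}` are modelled as
`Equiv.Perm (Fin n)` with `i : Fin n` representing the 1-based index `(i : ℕ) + 1`: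
`σ` is the left-rotation (`σ(i) = i + 1` cyclically), `τ` is the transposition of the first
two positions, `Kr = K_{r,n}` sends `i ↦ n - r + i` for `1 ≤ i ≤ r` and `i ↦ n + 1 - i`
for `r < i ≤ n`, and `Kr1 = K_{r+1,n}`.  Applying a move multiplies on the right by an
element of `G = {σ, σ⁻¹, τ}` (note `(π * g) i = π (g i)`, i.e. `π ∘ g`). -/
theorem K_step_three_r_sub_two (n r : ℕ) (hn : 4 ≤ n) (hr1 : 1 ≤ r) (hr : r ≤ n - 3)
    (σ τ Kr Kr1 : Equiv.Perm (Fin n))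
    (hσ : ∀ i : Fin n, (σ i : ℕ) = ((i : ℕ) + 1) % n)
    (hτ : ∀ i : Fin n, (τ i : ℕ) =
      if (i : ℕ) = 0 then 1 else if (i : ℕ) = 1 then 0 else (i : ℕ))
    (hKr : ∀ i : Fin n, (Kr i : ℕ) =
      if (i : ℕ) < r then n - r + (i : ℕ) else n - 1 - (i : ℕ))
    (hKr1 : ∀ i : Fin n, (Kr1 i : ℕ) =
      if (i : ℕ) < r + 1 then n - (r + 1) + (i : ℕ) else n - 1 - (i : ℕ)) :
    ∃ gs : List (Equiv.Perm (Fin n)),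
      gs.length = 3 * r - 2 ∧
      (∀ g ∈ gs, g = σ ∨ g = σ⁻¹ ∨ g = τ) ∧
      Kr * gs.prod = Kr1 :=
  K_step_three_r_sub_two_general n r hr1 hr σ τ Kr Kr1 hσ hτ hKr hKr1
end

section
/- For every n ≥ 3, the arrangement K_{n−2,n} can be transformed into the identity permutation in exactly 3 LRE moves; that is, there exist g_1, g_2, g_3 ∈ G with K_{n−2,n} ∘ g_1 ∘ g_2 ∘ g_3 = id. -/
/-- For every `n ≥ 3`, the arrangement `K_{n-2,n}` can be transformed into the identity
permutation in exactly 3 LRE moves.  Permutations of `{1,…,n}` are modelled as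
`Equiv.Perm (Fin n)` with `i : Fin n` representing the 1-based index `(i : ℕ) + 1`:
`σ` is the left-rotation, `τ` the transposition of the first two positions, and
`K = K_{n-2,n}` sends `i ↦ n - (n-2) + i = 2 + i` for `1 ≤ i ≤ n - 2` and `i ↦ n + 1 - i`
for `n - 2 < i ≤ n`.  A move multiplies on the right by an element of `G = {σ, σ⁻¹, τ}`. -/
theorem K_n_sub_two_to_identity (n : ℕ) (hn : 3 ≤ n)
    (σ τ K : Equiv.Perm (Fin n))
    (hσ : ∀ i : Fin n, (σ i : ℕ) = ((i : ℕ) + 1) % n)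
    (hτ : ∀ i : Fin n, (τ i : ℕ) =
      if (i : ℕ) = 0 then 1 else if (i : ℕ) = 1 then 0 else (i : ℕ))
    (hK : ∀ i : Fin n, (K i : ℕ) =
      if (i : ℕ) < n - 2 then n - (n - 2) + (i : ℕ) else n - 1 - (i : ℕ)) :
    ∃ g₁ g₂ g₃ : Equiv.Perm (Fin n),
      (g₁ = σ ∨ g₁ = σ⁻¹ ∨ g₁ = τ) ∧
      (g₂ = σ ∨ g₂ = σ⁻¹ ∨ g₂ = τ) ∧
      (g₃ = σ ∨ g₃ = σ⁻¹ ∨ g₃ = τ) ∧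
      K * g₁ * g₂ * g₃ = 1 := by
  refine ⟨σ⁻¹, σ⁻¹, τ, Or.inr (Or.inl rfl), Or.inr (Or.inl rfl), Or.inr (Or.inr rfl), ?_⟩
  have hm : ∀ a : ℕ, a < n → (a + 1) % n = if a + 1 < n then a + 1 else 0 := by
    intro a ha
    split_ifs with h
    · exact Nat.mod_eq_of_lt h
    · have : a + 1 = n := by omega
      simp [this]
  have hK' : K = τ * σ * σ := by
    ext i
    have e1 : (σ i : ℕ) = if (i : ℕ) + 1 < n then (i : ℕ) + 1 else 0 := by
      rw [hσ i]; exact hm _ i.isLt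
    have e2 : (σ (σ i) : ℕ) = if (σ i : ℕ) + 1 < n then (σ i : ℕ) + 1 else 0 := by
      rw [hσ (σ i)]; exact hm _ (σ i).isLt
    have h3 := hτ (σ (σ i))
    have hKi := hK i
    have hi : (i : ℕ) < n := i.isLt
    simp only [Equiv.Perm.mul_apply]
    split_ifs at e1 e2 h3 hKi <;> first | omega | exact absurd ‹False› not_false
  have hττ : τ * τ = 1 := by
    ext i
    simp only [Equiv.Perm.mul_apply, Equiv.Perm.one_apply]
    have h2 := hτ (τ i)
    rw [hτ i] at h2
    split_ifs at h2 <;> first | omega | exact absurd ‹False› not_false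
  calc K * σ⁻¹ * σ⁻¹ * τ = τ * σ * σ * σ⁻¹ * σ⁻¹ * τ := by rw [hK']
    _ = τ * τ := by group
    _ = 1 := hττ
end

section
/- For every n ≥ 3, the reverse permutation R_n can be sorted with LRE in exactly (3n² − 19n + 36)/2 moves; that is, R_n is a product of (3n² − 19n + 36)/2 elements of G (in particular, the minimum number of LRE moves needed to sort R_n is at most (3/2)n² − (19/2)n + 18). -/
/-!
Counting positions from 0, `R_n` is the product of the disjoint transpositions `(i, n-1-i)`,
`i < n/2`. Conjugating by `σ^i` carries `(0, n-1-2i)` to `(i, n-1-i)`; moreover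
`(0, n-1) = σ⁻¹ τ σ`, and `(0, m+1) = τ σ (0, m) σ⁻¹ τ` costs `4m + 1` moves. Multiplying the
conjugates in the order `i = 0, 1, …`, the rotations between consecutive factors telescope to a
single `σ`, giving a word of length `n² + O(n)`. For `n = 3` and `n ≥ 7` this is at most
`(3n² - 19n + 36)/2` with even difference, so padding with pairs `σ σ⁻¹` reaches the exact count.
-/

open Equiv Pointwise

namespace Set

variable {M : Type*} [Monoid M] {S : Set M} {a b : M} {k l : ℕ}

theorem mul_mem_pow_add (ha : a ∈ S ^ k) (hb : b ∈ S ^ l) : a * b ∈ S ^ (k + l) :=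
  pow_add S k l ▸ mul_mem_mul ha hb

theorem mul_mem_pow_succ (ha : a ∈ S ^ k) (hb : b ∈ S) : a * b ∈ S ^ (k + 1) :=
  pow_succ S k ▸ mul_mem_mul ha hb

theorem mul_mem_pow_succ' (ha : a ∈ S) (hb : b ∈ S ^ k) : a * b ∈ S ^ (k + 1) :=
  pow_succ' S k ▸ mul_mem_mul ha hb

theorem list_prod_mem_pow {l : List M} (hl : ∀ g ∈ l, g ∈ S) : l.prod ∈ S ^ l.length := by
  induction l with
  | nil => exact mem_one.2 rfl
  | cons g l ih =>
    simp only [List.forall_mem_cons] at hl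
    exact mul_mem_pow_succ' hl.1 (ih hl.2)

variable {G : Type*} [Group G] {S : Set G} {a g : G} {k : ℕ}

theorem conj_mem_pow_add_two (ha : a ∈ S) (ha' : a⁻¹ ∈ S) (hg : g ∈ S ^ k) :
    a * g * a⁻¹ ∈ S ^ (k + 2) :=
  mul_mem_pow_succ (mul_mem_pow_succ' ha hg) ha'

theorem mem_pow_add_two_mul (ha : a ∈ S) (ha' : a⁻¹ ∈ S) (hg : g ∈ S ^ k) :
    ∀ m, g ∈ S ^ (k + 2 * m)
  | 0 => hg
  | m + 1 => by
    rw [mul_add, mul_one, ← add_assoc]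
    simpa using mul_mem_pow_succ (mul_mem_pow_succ (mem_pow_add_two_mul ha ha' hg m) ha) ha'

end Set

def lreGens (n : ℕ) [NeZero n] : Set (Perm (Fin n)) := {finRotate n, (finRotate n)⁻¹, swap 0 1}

section LRE

variable {n : ℕ}

theorem finRotate_mem_lreGens [NeZero n] : finRotate n ∈ lreGens n := by simp [lreGens]

theorem inv_finRotate_mem_lreGens [NeZero n] : (finRotate n)⁻¹ ∈ lreGens n := by simp [lreGens]

theorem swap_zero_one_mem_lreGens [NeZero n] : swap 0 1 ∈ lreGens n := by simp [lreGens]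

theorem val_finRotate_pow (k : ℕ) (x : Fin n) : ((finRotate n ^ k) x : ℕ) = (x + k) % n := by
  induction k with
  | zero => simp [Nat.mod_eq_of_lt x.2]
  | succ k ih =>
    rw [pow_succ', Perm.mul_apply, finRotate_apply, Fin.val_add, ih, Fin.val_one',
      Nat.add_mod_mod, Nat.mod_add_mod, add_assoc]

theorem finRotate_pow_mul_swap {k a b a' b' : ℕ} (ha : a + k = a') (hb : b + k = b')
    (ha' : a' < n) (hb' : b' < n) :
    finRotate n ^ k * swap ⟨a, by omega⟩ ⟨b, by omega⟩ =
      swap ⟨a', ha'⟩ ⟨b', hb'⟩ * finRotate n ^ k := by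
  rw [mul_swap_eq_swap_mul]
  congr 2 <;> ext <;> simp [val_finRotate_pow, Nat.mod_eq_of_lt, *]

theorem swap_zero_mem_lreGens_pow [NeZero n] (m : ℕ) (h : m + 1 < n) :
    swap ⟨0, by omega⟩ ⟨m + 1, h⟩ ∈ lreGens n ^ (4 * m + 1) := by
  induction m with
  | zero =>
    have : (⟨1, h⟩ : Fin n) = 1 := Fin.ext (by simp [Nat.mod_eq_of_lt h])
    simpa [this] using swap_zero_one_mem_lreGens
  | succ m ih =>
    have hconj : swap ⟨0, by omega⟩ ⟨m + 2, h⟩ = swap 0 1 *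
        (finRotate n * swap ⟨0, by omega⟩ ⟨m + 1, by omega⟩ * (finRotate n)⁻¹) * (swap 0 1)⁻¹ := by
      rw [← pow_one (finRotate n), finRotate_pow_mul_swap rfl rfl (by omega) h,
        mul_inv_cancel_right, ← swap_apply_apply]
      have h1 : 1 % n = 1 := Nat.mod_eq_of_lt (by omega)
      congr 1 <;> ext <;> simp [swap_apply_def, Fin.ext_iff, h1]
    rw [hconj]
    refine Set.conj_mem_pow_add_two swap_zero_one_mem_lreGens
      (by simpa using swap_zero_one_mem_lreGens) ?_
    exact Set.conj_mem_pow_add_two finRotate_mem_lreGens inv_finRotate_mem_lreGens (ih (by omega))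

def outerRev (n j : ℕ) : Perm (Fin n) :=
  Function.Involutive.toPerm (fun x => if (x : ℕ) ≤ j ∨ (x.rev : ℕ) ≤ j then x.rev else x)
    fun x => by
      by_cases hx : (x : ℕ) ≤ j ∨ (x.rev : ℕ) ≤ j
      · simp only [Fin.rev_rev, or_comm, if_pos hx]
      · simp only [if_neg hx]

theorem val_outerRev (j : ℕ) (x : Fin n) :
    (outerRev n j x : ℕ) = if (x : ℕ) ≤ j ∨ n ≤ x + j + 1 then n - 1 - x else x := by
  simp only [outerRev, Function.Involutive.coe_toPerm, apply_ite Fin.val, Fin.val_rev]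
  split_ifs <;> omega

theorem val_swap_mk {a b : ℕ} (ha : a < n) (hb : b < n) (x : Fin n) :
    (swap (⟨a, ha⟩ : Fin n) ⟨b, hb⟩ x : ℕ) =
      if (x : ℕ) = a then b else if (x : ℕ) = b then a else x := by
  simp [swap_apply_def, apply_ite Fin.val, Fin.ext_iff]

theorem outerRev_zero_mem_lreGens_pow [NeZero n] (h : 2 ≤ n) : outerRev n 0 ∈ lreGens n ^ 3 := by
  have h1 : 1 % n = 1 := Nat.mod_eq_of_lt h
  have hσ0 : (finRotate n)⁻¹ 0 = ⟨n - 1, by omega⟩ :=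
    Perm.inv_eq_iff_eq.2 <| Fin.ext <| by
      simp [Fin.val_add, h1, Nat.sub_add_cancel (by omega : 1 ≤ n)]
  have hσ1 : (finRotate n)⁻¹ 1 = ⟨0, by omega⟩ :=
    Perm.inv_eq_iff_eq.2 (by simp)
  have : outerRev n 0 = (finRotate n)⁻¹ * swap 0 1 * (finRotate n)⁻¹⁻¹ := by
    rw [← swap_apply_apply, hσ0, hσ1]
    ext x
    rw [val_outerRev, val_swap_mk]
    split_ifs <;> omega
  rw [this]
  exact Set.conj_mem_pow_add_two inv_finRotate_mem_lreGens (by simpa using finRotate_mem_lreGens)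
    (by simpa using swap_zero_one_mem_lreGens)

theorem outerRev_succ {j : ℕ} (h : 2 * j + 4 ≤ n) :
    outerRev n (j + 1) = outerRev n j * swap ⟨j + 1, by omega⟩ ⟨n - 2 - j, by omega⟩ := by
  ext x
  rw [Perm.mul_apply, val_outerRev, val_outerRev, val_swap_mk]
  split_ifs <;> omega

theorem outerRev_eq_revPerm {j : ℕ} (h : n ≤ 2 * j + 3) : outerRev n j = Fin.revPerm := by
  ext x
  rw [val_outerRev, Fin.revPerm_apply, Fin.val_rev]
  split_ifs <;> omega

theorem outerRev_mul_finRotate_pow_mem [NeZero n] : ∀ j, 2 * j + 2 ≤ n →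
    ∃ a, a + 4 * j ^ 2 + 10 * j = 3 + 4 * n * j ∧
      outerRev n j * finRotate n ^ j ∈ lreGens n ^ a
  | 0, h => ⟨3, rfl, by simpa using outerRev_zero_mem_lreGens_pow (by omega)⟩
  | j + 1, h => by
    obtain ⟨a, ha, hmem⟩ := outerRev_mul_finRotate_pow_mem j (by omega)
    obtain ⟨c, rfl⟩ : ∃ c, n = c + 2 * j + 4 := ⟨n - 2 * j - 4, by omega⟩
    have hstep : outerRev (c + 2 * j + 4) (j + 1) * finRotate _ ^ (j + 1) =
        outerRev _ j * finRotate _ ^ j * finRotate _ *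
          swap (⟨0, by omega⟩ : Fin (c + 2 * j + 4)) ⟨c + 1, by omega⟩ := by
      rw [outerRev_succ h, mul_assoc, ← finRotate_pow_mul_swap (k := j + 1) (a := 0) (b := c + 1)
        (a' := j + 1) (b' := c + 2 * j + 4 - 2 - j) (by omega) (by omega), pow_succ]
      simp only [mul_assoc]
    refine ⟨a + 1 + (4 * c + 1), by linear_combination ha, ?_⟩
    rw [hstep]
    exact Set.mul_mem_pow_add (Set.mul_mem_pow_succ hmem finRotate_mem_lreGens)
      (swap_zero_mem_lreGens_pow c (by omega))

theorem exists_revPerm_mem_lreGens_pow_of_le [NeZero n] {j : ℕ} (h₁ : 2 * j + 2 ≤ n)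
    (h₂ : n ≤ 2 * j + 3) :
    ∃ a, a + 4 * j ^ 2 + 9 * j = 3 + 4 * n * j ∧ Fin.revPerm ∈ lreGens n ^ a := by
  obtain ⟨a, ha, hmem⟩ := outerRev_mul_finRotate_pow_mem j h₁
  refine ⟨a + j, by linear_combination ha, ?_⟩
  have hrev : Fin.revPerm = outerRev n j * finRotate n ^ j * (finRotate n)⁻¹ ^ j := by
    rw [outerRev_eq_revPerm h₂, inv_pow, mul_inv_cancel_right]
  rw [hrev]
  exact Set.mul_mem_pow_add hmem (Set.pow_mem_pow inv_finRotate_mem_lreGens)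

theorem mem_lreGens_pow_add_two_mul [NeZero n] {g : Perm (Fin n)} {k : ℕ}
    (hg : g ∈ lreGens n ^ k) (m : ℕ) : g ∈ lreGens n ^ (k + 2 * m) :=
  Set.mem_pow_add_two_mul finRotate_mem_lreGens inv_finRotate_mem_lreGens hg m

theorem revPerm_mem_lreGens_pow_of_eq_prod [NeZero n] {l : List (Perm (Fin n))}
    (h : Fin.revPerm = l.prod) (hl : ∀ g ∈ l, g ∈ lreGens n) :
    Fin.revPerm ∈ lreGens n ^ l.length :=
  h ▸ Set.list_prod_mem_pow hl

/- For `n = 4, 5, 6` the general word is too long; these are shortest words, found by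
breadth-first search. -/
theorem revPerm_mem_lreGens_four : (Fin.revPerm : Perm (Fin 4)) ∈ lreGens 4 ^ 4 :=
  revPerm_mem_lreGens_pow_of_eq_prod (l := [swap 0 1, finRotate 4, finRotate 4, swap 0 1])
    (by ext x; revert x; decide) (by simp [lreGens])

theorem revPerm_mem_lreGens_five : (Fin.revPerm : Perm (Fin 5)) ∈ lreGens 5 ^ 8 :=
  revPerm_mem_lreGens_pow_of_eq_prod (l := [swap 0 1, finRotate 5, finRotate 5, swap 0 1,
      finRotate 5, swap 0 1, (finRotate 5)⁻¹, swap 0 1])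
    (by ext x; revert x; decide) (by simp [lreGens])

theorem revPerm_mem_lreGens_six : (Fin.revPerm : Perm (Fin 6)) ∈ lreGens 6 ^ 13 :=
  revPerm_mem_lreGens_pow_of_eq_prod (l := [finRotate 6, swap 0 1, finRotate 6, swap 0 1,
      (finRotate 6)⁻¹, swap 0 1, (finRotate 6)⁻¹, (finRotate 6)⁻¹, swap 0 1, (finRotate 6)⁻¹,
      swap 0 1, finRotate 6, swap 0 1])
    (by ext x; revert x; decide) (by simp [lreGens])

theorem exists_revPerm_mem_lreGens_pow [NeZero n] (hn : 3 ≤ n) :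
    ∃ k, 2 * k + 19 * n = 3 * n ^ 2 + 36 ∧ Fin.revPerm ∈ lreGens n ^ k := by
  obtain ⟨j, rfl | rfl⟩ : ∃ j, n = 2 * j + 2 ∨ n = 2 * j + 3 := ⟨n / 2 - 1, by omega⟩
  · rcases (by omega : j = 1 ∨ j = 2 ∨ 3 ≤ j) with rfl | rfl | hj
    · exact ⟨4, rfl, revPerm_mem_lreGens_four⟩
    · exact ⟨15, rfl, mem_lreGens_pow_add_two_mul revPerm_mem_lreGens_six 1⟩
    · obtain ⟨a, ha, hmem⟩ := exists_revPerm_mem_lreGens_pow_of_le (j := j) le_rfl (by omega)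
      obtain ⟨t, rfl⟩ : ∃ t, j = t + 3 := ⟨j - 3, by omega⟩
      exact ⟨_, by linear_combination 2 * ha, mem_lreGens_pow_add_two_mul hmem (t * (t + 3) + 1)⟩
  · rcases (by omega : j = 0 ∨ j = 1 ∨ 2 ≤ j) with rfl | rfl | hj
    · obtain ⟨a, ha, hmem⟩ :=
        exists_revPerm_mem_lreGens_pow_of_le (j := 0) (n := 3) (by omega) le_rfl
      exact ⟨a, by linear_combination 2 * ha, hmem⟩
    · exact ⟨8, rfl, revPerm_mem_lreGens_five⟩
    · obtain ⟨a, ha, hmem⟩ := exists_revPerm_mem_lreGens_pow_of_le (j := j) (by omega) le_rfl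
      obtain ⟨t, rfl⟩ : ∃ t, j = t + 2 := ⟨j - 2, by omega⟩
      exact ⟨_, by linear_combination 2 * ha, mem_lreGens_pow_add_two_mul hmem ((t + 2) * t)⟩

end LRE

/-- For every `n ≥ 3`, the reverse permutation `R_n` can be sorted with LRE in exactly
`(3n² - 19n + 36)/2` moves, i.e. `R_n` is a product of that many elements of
`G = {σ, σ⁻¹, τ}`.  To avoid natural subtraction the count `k = gs.length` is expressed by
the equivalent equation `2k + 19n = 3n² + 36`.  Permutations of `{1,…,n}` are modelled as
`Equiv.Perm (Fin n)` with `i : Fin n` representing the 1-based index `(i : ℕ) + 1`: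
`σ` is the left-rotation, `τ` the transposition of the first two positions, and
`R = R_n` sends `i ↦ n + 1 - i`. -/
theorem sort_reverse_upper_bound (n : ℕ) (hn : 3 ≤ n)
    (σ τ R : Equiv.Perm (Fin n))
    (hσ : ∀ i : Fin n, (σ i : ℕ) = ((i : ℕ) + 1) % n)
    (hτ : ∀ i : Fin n, (τ i : ℕ) =
      if (i : ℕ) = 0 then 1 else if (i : ℕ) = 1 then 0 else (i : ℕ))
    (hR : ∀ i : Fin n, (R i : ℕ) = n - 1 - (i : ℕ)) :
    ∃ gs : List (Equiv.Perm (Fin n)),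
      2 * gs.length + 19 * n = 3 * n ^ 2 + 36 ∧
      (∀ g ∈ gs, g = σ ∨ g = σ⁻¹ ∨ g = τ) ∧
      gs.prod = R := by
  have : NeZero n := ⟨by omega⟩
  obtain rfl : σ = finRotate n := Equiv.ext fun i => Fin.ext <| by
    rw [hσ, finRotate_apply, Fin.val_add, Fin.val_one', Nat.add_mod_mod]
  obtain rfl : τ = swap 0 1 := Equiv.ext fun i => Fin.ext <| by
    have h01 : (swap 0 1 : Perm (Fin n)) = swap ⟨0, by omega⟩ ⟨1, by omega⟩ := by
      congr 1
      exact Fin.ext (Nat.mod_eq_of_lt (show 1 < n by omega))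
    rw [hτ, h01, val_swap_mk]
  obtain rfl : R = Fin.revPerm := Equiv.ext fun i => Fin.ext <| by
    rw [hR, Fin.revPerm_apply, Fin.val_rev]
    omega
  obtain ⟨k, hk, hmem⟩ := exists_revPerm_mem_lreGens_pow hn
  obtain ⟨f, hf⟩ := Set.mem_pow.1 hmem
  refine ⟨List.ofFn fun i => (f i : Perm (Fin n)), by rwa [List.length_ofFn], ?_, hf⟩
  simp only [List.mem_ofFn]
  rintro _ ⟨i, rfl⟩
  exact (f i).2
end

section
/- For every n ≥ 6, the reverse permutation R_n can be transformed into the arrangement A_n in exactly 2n−6 LRE moves when n is even, and in exactly 2n−8 LRE moves when n is odd; that is, there exist that many generators g_1, g_2, … ∈ G with R_n ∘ g_1 ∘ ⋯ = A_n. -/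
/-!
With `p = n - c - 2`, the word `τ (στ)^p (σ⁻¹τ)^p σ` has `4p + 2` letters, which is `2n - 6` or
`2n - 8` according to the parity of `n`. Since `τ` is an involution, `στ = τ (τσ) τ` and
`σ⁻¹τ = (τσ)⁻¹`, so the word equals `(τσ)^p τ (τσ)^{-p} σ`: the transposition `τ = (0 1)` conjugated
by `(τσ)^p` and followed by `σ`. As `τσ` fixes `0` and cycles `1, 2, …, n - 1`, this conjugate is
`(0 p+1)`, and `R ∘ (0 p+1) ∘ σ = A` is checked pointwise.
-/

open Equiv Equiv.Perm

theorem mul_mul_pow_mul_inv_mul_pow_of_mul_self_eq_one {G : Type*} [Group G] {τ : G}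
    (hτ : τ * τ = 1) (σ : G) (k : ℕ) :
    τ * (σ * τ) ^ k * (σ⁻¹ * τ) ^ k = (τ * σ) ^ k * τ * ((τ * σ) ^ k)⁻¹ := by
  have hτinv : τ⁻¹ = τ := inv_eq_of_mul_eq_one_right hτ
  have hconj : σ * τ = τ * (τ * σ) * τ⁻¹ := by
    rw [hτinv, ← mul_assoc τ τ σ, hτ, one_mul]
  have hinv : σ⁻¹ * τ = (τ * σ)⁻¹ := by rw [mul_inv_rev, hτinv]
  rw [hconj, conj_pow, hinv, inv_pow, hτinv]
  simp only [← mul_assoc, hτ, one_mul]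

theorem val_pow_apply_eq_add {n : ℕ} {ρ : Perm (Fin n)}
    (hρ : ∀ i : Fin n, 1 ≤ (i : ℕ) → (i : ℕ) + 1 < n → (ρ i : ℕ) = (i : ℕ) + 1) (i : Fin n)
    (hi : 1 ≤ (i : ℕ)) (k : ℕ) (hk : (i : ℕ) + k < n) : ((ρ ^ k) i : ℕ) = (i : ℕ) + k := by
  induction k with
  | zero => rfl
  | succ k ih =>
    rw [pow_succ', mul_apply, hρ _ (by rw [ih (by omega)]; omega) (by rw [ih (by omega)]; omega),
      ih (by omega), add_assoc]

theorem eq_swap_zero_one_of_val_apply {n : ℕ} (hn : 2 ≤ n) {τ : Perm (Fin n)}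
    (hτ : ∀ i : Fin n, (τ i : ℕ) =
      if (i : ℕ) = 0 then 1 else if (i : ℕ) = 1 then 0 else (i : ℕ)) :
    τ = swap ⟨0, by omega⟩ ⟨1, by omega⟩ := by
  ext i
  rw [hτ, swap_apply_def]
  split_ifs <;> simp_all [Fin.ext_iff]

theorem conj_by_pow_eq_swap_zero_succ {n : ℕ} {σ τ : Perm (Fin n)}
    (hσ : ∀ i : Fin n, (σ i : ℕ) = ((i : ℕ) + 1) % n)
    (hτ : ∀ i : Fin n, (τ i : ℕ) =
      if (i : ℕ) = 0 then 1 else if (i : ℕ) = 1 then 0 else (i : ℕ))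
    (k : ℕ) (hk : k + 2 ≤ n) :
    (τ * σ) ^ k * τ * ((τ * σ) ^ k)⁻¹ = swap ⟨0, by omega⟩ ⟨k + 1, by omega⟩ := by
  have hτ_swap := eq_swap_zero_one_of_val_apply (by omega) hτ
  have hfix : (τ * σ) ⟨0, by omega⟩ = ⟨0, by omega⟩ := by
    ext
    rw [mul_apply, hτ, hσ]
    simp [Nat.mod_eq_of_lt (show 1 < n by omega)]
  have hshift : ∀ i : Fin n, 1 ≤ (i : ℕ) → (i : ℕ) + 1 < n → ((τ * σ) i : ℕ) = (i : ℕ) + 1 := by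
    intro i hi1 hi2
    rw [mul_apply, hτ, hσ, Nat.mod_eq_of_lt hi2, if_neg (by omega), if_neg (by omega)]
  nth_rw 2 [hτ_swap]
  rw [← swap_apply_apply, pow_apply_eq_self_of_apply_eq_self hfix]
  congr
  ext
  rw [val_pow_apply_eq_add hshift _ le_rfl k (show 1 + k < n by omega), add_comm]

theorem reverse_mul_swap_mul_rotate {n : ℕ} (hn : 4 ≤ n) {σ R A : Perm (Fin n)}
    (hσ : ∀ i : Fin n, (σ i : ℕ) = ((i : ℕ) + 1) % n)
    (hR : ∀ i : Fin n, (R i : ℕ) = n - 1 - (i : ℕ))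
    (hA : ∀ i : Fin n, (A i : ℕ) =
      if (i : ℕ) = n - (n + 1) / 2 - 2 then n - 1
      else if (i : ℕ) = n - 1 then (n + 1) / 2
      else n - 2 - (i : ℕ))
    {a b : Fin n} (ha : (a : ℕ) = 0) (hb : (b : ℕ) = n - (n + 1) / 2 - 1) :
    R * (swap a b * σ) = A := by
  ext i
  have hi := i.isLt
  have hσi : (σ i : ℕ) = if (i : ℕ) = n - 1 then 0 else (i : ℕ) + 1 := by
    rw [hσ]
    split_ifs with h
    · rw [h, Nat.sub_add_cancel (by omega), Nat.mod_self]
    · exact Nat.mod_eq_of_lt (by omega)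
  rw [mul_apply, mul_apply, hR, hA, swap_apply_def]
  simp only [Fin.ext_iff, ha, hb]
  split_ifs at hσi ⊢ <;> omega

/-- For every `n ≥ 6`, the reverse permutation `R_n` can be transformed into the
arrangement `A_n` in exactly `2n - 6` LRE moves when `n` is even and `2n - 8` moves
when `n` is odd.  Permutations of `{1,…,n}` are modelled as `Equiv.Perm (Fin n)` with
`i : Fin n` representing the 1-based index `(i : ℕ) + 1`: `σ` is the left-rotation,
`τ` the transposition of the first two positions, `R = R_n` sends `i ↦ n + 1 - i`, and,
with `c = ⌈n/2⌉ = (n+1)/2`, the arrangement `A = A_n` satisfies `A(n - c - 1) = n`,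
`A(n) = c + 1`, and `A(i) = n - i` otherwise.  A move multiplies on the right by an
element of `G = {σ, σ⁻¹, τ}`. -/
theorem reverse_to_A (n : ℕ) (hn : 6 ≤ n)
    (σ τ R A : Equiv.Perm (Fin n))
    (hσ : ∀ i : Fin n, (σ i : ℕ) = ((i : ℕ) + 1) % n)
    (hτ : ∀ i : Fin n, (τ i : ℕ) =
      if (i : ℕ) = 0 then 1 else if (i : ℕ) = 1 then 0 else (i : ℕ))
    (hR : ∀ i : Fin n, (R i : ℕ) = n - 1 - (i : ℕ))
    (hA : ∀ i : Fin n, (A i : ℕ) =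
      if (i : ℕ) = n - (n + 1) / 2 - 2 then n - 1
      else if (i : ℕ) = n - 1 then (n + 1) / 2
      else n - 2 - (i : ℕ)) :
    ∃ gs : List (Equiv.Perm (Fin n)),
      (n % 2 = 0 → gs.length = 2 * n - 6) ∧
      (n % 2 = 1 → gs.length = 2 * n - 8) ∧
      (∀ g ∈ gs, g = σ ∨ g = σ⁻¹ ∨ g = τ) ∧
      R * gs.prod = A := by
  set p := n - (n + 1) / 2 - 2
  set gs := τ :: ((List.replicate p [σ, τ]).flatten ++ (List.replicate p [σ⁻¹, τ]).flatten ++ [σ])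
  have hlen : gs.length = 4 * p + 2 := by
    simp only [gs, List.length_cons, List.length_append, List.length_flatten, List.map_replicate,
      List.sum_replicate, smul_eq_mul, List.length_nil]
    omega
  have hτ_inv : τ * τ = 1 := by rw [eq_swap_zero_one_of_val_apply (by omega) hτ, swap_mul_self]
  refine ⟨gs, fun _ => by omega, fun _ => by omega, by aesop, ?_⟩
  calc R * gs.prod = R * (τ * (σ * τ) ^ p * (σ⁻¹ * τ) ^ p * σ) := by
        simp [gs, List.prod_flatten, mul_assoc]
    _ = R * ((τ * σ) ^ p * τ * ((τ * σ) ^ p)⁻¹ * σ) := by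
        rw [mul_mul_pow_mul_inv_mul_pow_of_mul_self_eq_one hτ_inv]
    _ = R * (swap ⟨0, _⟩ ⟨p + 1, _⟩ * σ) := by
        rw [conj_by_pow_eq_swap_zero_succ hσ hτ p (by omega)]
    _ = A := reverse_mul_swap_mul_rotate (by omega) hσ hR hA rfl (show p + 1 = _ by omega)
end

section
/- For every n ≥ 8, the arrangement A_n can be transformed into the arrangement K'_{⌊n/2⌋,n} in exactly (3n² − 34n + 112)/8 LRE moves when n is even, and in exactly (3n² − 40n + 149)/8 LRE moves when n is odd; that is, there exist that many generators g_1, g_2, … ∈ G with A_n ∘ g_1 ∘ ⋯ = K'_{⌊n/2⌋,n}. -/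
/-!
Right-multiplying an arrangement by the run `σ^a τ (σ⁻¹ τ)^a` moves its entry in position
`a + 1` (0-based) to the front, so the runs for `a = 0, …, j - 1` together reverse its first
`j + 1` entries, at a cost of `∑ (3a + 1)` moves. Reversing the first `⌊n/2⌋ - 2` entries of
`A_n` and then rotating left `⌊n/2⌋ - 1` times yields `K'_{⌊n/2⌋,n}`.
-/

namespace LRE

open Equiv

variable {n : ℕ}

def IsArrangementA (A : Perm (Fin n)) : Prop :=
  ∀ i : Fin n, (A i : ℕ) =
    if (i : ℕ) = n - (n + 1) / 2 - 2 then n - 1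
    else if (i : ℕ) = n - 1 then (n + 1) / 2
    else n - 2 - (i : ℕ)

def IsArrangementK' (r : ℕ) (K' : Perm (Fin n)) : Prop :=
  ∀ i : Fin n, (K' i : ℕ) = if (i : ℕ) < n - r then n - r - 1 - (i : ℕ) else (i : ℕ)

section Rotation

variable {σ : Perm (Fin n)}

theorem IsLeftRotation.val_apply (hσ : IsLeftRotation σ) (i : Fin n) :
    (σ i : ℕ) = if (i : ℕ) + 1 = n then 0 else (i : ℕ) + 1 := by
  rw [hσ i]
  split_ifs with h
  · rw [h, Nat.mod_self]
  · exact Nat.mod_eq_of_lt (by omega)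

theorem IsLeftRotation.val_inv_apply_s4 (hσ : IsLeftRotation σ) (i : Fin n) :
    (σ⁻¹ i : ℕ) = if (i : ℕ) = 0 then n - 1 else (i : ℕ) - 1 := by
  have h := hσ.val_apply (σ⁻¹ i)
  rw [← Perm.mul_apply, mul_inv_cancel, Perm.one_apply] at h
  have := (σ⁻¹ i).isLt
  split_ifs at h ⊢ <;> omega

theorem IsLeftRotation.val_pow_apply_s4 (hσ : IsLeftRotation σ) {k : ℕ} (hk : k ≤ n) (i : Fin n) :
    ((σ ^ k) i : ℕ) = if (i : ℕ) + k < n then (i : ℕ) + k else (i : ℕ) + k - n := by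
  induction k generalizing i with
  | zero => simp [i.isLt]
  | succ k ih =>
    rw [pow_succ, Perm.mul_apply, ih (by omega), hσ.val_apply]
    split_ifs <;> omega

end Rotation

section Words

variable (σ τ : Perm (Fin n))

def insertionRun (a : ℕ) : List (Perm (Fin n)) :=
  List.replicate a σ ++ τ :: (List.replicate a [σ⁻¹, τ]).flatten

def prefixReversalWord (j : ℕ) : List (Perm (Fin n)) :=
  ((List.range j).map (insertionRun σ τ)).flatten

theorem insertionRun_succ (a : ℕ) :
    insertionRun σ τ (a + 1) = σ :: (insertionRun σ τ a ++ [σ⁻¹, τ]) := by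
  rw [insertionRun, List.replicate_succ' (a := [σ⁻¹, τ]), List.replicate_succ]
  simp [insertionRun]

theorem prefixReversalWord_succ (j : ℕ) :
    prefixReversalWord σ τ (j + 1) = prefixReversalWord σ τ j ++ insertionRun σ τ j := by
  simp [prefixReversalWord, List.range_succ]

theorem length_insertionRun (a : ℕ) : (insertionRun σ τ a).length = 3 * a + 1 := by
  induction a with
  | zero => simp [insertionRun]
  | succ a ih => simp [insertionRun_succ, ih]; omega

theorem two_mul_length_prefixReversalWord (j : ℕ) :
    2 * (prefixReversalWord σ τ j).length + j = 3 * j ^ 2 := by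
  induction j with
  | zero => simp [prefixReversalWord]
  | succ j ih =>
    rw [prefixReversalWord_succ, List.length_append, length_insertionRun]
    nlinarith

theorem mem_insertionRun {g : Perm (Fin n)} {a : ℕ} (hg : g ∈ insertionRun σ τ a) :
    g = σ ∨ g = σ⁻¹ ∨ g = τ := by
  simp only [insertionRun, List.mem_append, List.mem_cons, List.mem_flatten, List.mem_replicate]
    at hg
  grind

theorem mem_prefixReversalWord {g : Perm (Fin n)} {j : ℕ} (hg : g ∈ prefixReversalWord σ τ j) :
    g = σ ∨ g = σ⁻¹ ∨ g = τ := by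
  simp only [prefixReversalWord, List.mem_flatten, List.mem_map] at hg
  obtain ⟨_, ⟨a, -, rfl⟩, hg⟩ := hg
  exact mem_insertionRun σ τ hg

variable {σ τ}

theorem val_prod_insertionRun_apply (hσ : IsLeftRotation σ) (hτ : IsExchange τ) {a : ℕ}
    (ha : a + 1 < n) (i : Fin n) :
    ((insertionRun σ τ a).prod i : ℕ) =
      if (i : ℕ) = 0 then a + 1 else if (i : ℕ) ≤ a + 1 then (i : ℕ) - 1 else (i : ℕ) := by
  induction a generalizing i with
  | zero =>
    simp only [insertionRun, List.replicate_zero, List.flatten_nil, List.nil_append,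
      List.prod_singleton, hτ i]
    split_ifs <;> omega
  | succ a ih =>
    simp only [insertionRun_succ, List.prod_cons, List.prod_append,
      List.prod_nil, mul_one, Perm.mul_apply]
    have hτi := hτ i
    have hστi := hσ.val_inv_apply_s4 (τ i)
    have hrun := ih (by omega) (σ⁻¹ (τ i))
    rw [hσ.val_apply]
    have := i.isLt
    split_ifs at hτi hστi hrun ⊢ <;> omega

theorem val_prod_prefixReversalWord_apply (hσ : IsLeftRotation σ) (hτ : IsExchange τ) {j : ℕ}
    (hj : j < n) (i : Fin n) :
    ((prefixReversalWord σ τ j).prod i : ℕ) = if (i : ℕ) ≤ j then j - (i : ℕ) else (i : ℕ) := by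
  induction j generalizing i with
  | zero => simp [prefixReversalWord]
  | succ j ih =>
    rw [prefixReversalWord_succ, List.prod_append, Perm.mul_apply, ih (by omega)]
    have := val_prod_insertionRun_apply hσ hτ hj i
    split_ifs at this ⊢ <;> omega

theorem arrangementA_mul_prefixReversal_mul_rotate_pow {A K' : Perm (Fin n)}
    (hσ : IsLeftRotation σ) (hτ : IsExchange τ) (hA : IsArrangementA A)
    (hK' : IsArrangementK' (n / 2) K') {p : ℕ} (hp : n / 2 = p + 3) :
    A * (prefixReversalWord σ τ p).prod * σ ^ (p + 2) = K' := by
  ext i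
  simp only [Perm.mul_apply]
  have hrot := hσ.val_pow_apply_s4 (k := p + 2) (by omega) i
  generalize (σ ^ (p + 2)) i = x at hrot
  have hrev := val_prod_prefixReversalWord_apply hσ hτ (j := p) (by omega) x
  generalize (prefixReversalWord σ τ p).prod x = y at hrev
  rw [hA y, hK' i]
  have := i.isLt
  have := x.isLt
  split_ifs at hrot hrev ⊢ <;> omega

end Words

end LRE

open LRE in
/-- For every `n ≥ 8`, the arrangement `A_n` can be transformed into the arrangement
`K'_{⌊n/2⌋,n}` in exactly `(3n² - 34n + 112)/8` LRE moves when `n` is even and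
`(3n² - 40n + 149)/8` moves when `n` is odd (the counts `k = gs.length` are expressed by
the equivalent subtraction-free equations `8k + 34n = 3n² + 112` and
`8k + 40n = 3n² + 149`).  Permutations of `{1,…,n}` are modelled as `Equiv.Perm (Fin n)`
with `i : Fin n` representing the 1-based index `(i : ℕ) + 1`: `σ` is the left-rotation,
`τ` the transposition of the first two positions; with `c = ⌈n/2⌉ = (n+1)/2`, `A = A_n`
satisfies `A(n - c - 1) = n`, `A(n) = c + 1`, `A(i) = n - i` otherwise; and, with
`r = ⌊n/2⌋`, `K' = K'_{r,n}` sends `i ↦ n - r + 1 - i` for `1 ≤ i ≤ n - r` and `i ↦ i`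
for `n - r < i ≤ n`.  A move multiplies on the right by an element of `G = {σ, σ⁻¹, τ}`. -/
theorem A_to_Kprime (n : ℕ) (hn : 8 ≤ n)
    (σ τ A K' : Equiv.Perm (Fin n))
    (hσ : ∀ i : Fin n, (σ i : ℕ) = ((i : ℕ) + 1) % n)
    (hτ : ∀ i : Fin n, (τ i : ℕ) =
      if (i : ℕ) = 0 then 1 else if (i : ℕ) = 1 then 0 else (i : ℕ))
    (hA : ∀ i : Fin n, (A i : ℕ) =
      if (i : ℕ) = n - (n + 1) / 2 - 2 then n - 1
      else if (i : ℕ) = n - 1 then (n + 1) / 2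
      else n - 2 - (i : ℕ))
    (hK' : ∀ i : Fin n, (K' i : ℕ) =
      if (i : ℕ) < n - n / 2 then n - n / 2 - 1 - (i : ℕ) else (i : ℕ)) :
    ∃ gs : List (Equiv.Perm (Fin n)),
      (n % 2 = 0 → 8 * gs.length + 34 * n = 3 * n ^ 2 + 112) ∧
      (n % 2 = 1 → 8 * gs.length + 40 * n = 3 * n ^ 2 + 149) ∧
      (∀ g ∈ gs, g = σ ∨ g = σ⁻¹ ∨ g = τ) ∧
      A * gs.prod = K' := by
  obtain ⟨p, hp⟩ : ∃ p, n / 2 = p + 3 := ⟨n / 2 - 3, by omega⟩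
  have hlen := two_mul_length_prefixReversalWord σ τ p
  refine ⟨prefixReversalWord σ τ p ++ List.replicate (p + 2) σ, ?_, ?_, ?_, ?_⟩
  · intro _
    obtain rfl : n = 2 * p + 6 := by omega
    simp only [List.length_append, List.length_replicate]
    nlinarith
  · intro _
    obtain rfl : n = 2 * p + 7 := by omega
    simp only [List.length_append, List.length_replicate]
    nlinarith
  · intro g hg
    rcases List.mem_append.1 hg with hg | hg
    · exact mem_prefixReversalWord σ τ hg
    · exact Or.inl (List.eq_of_mem_replicate hg)
  · rw [List.prod_append, List.prod_replicate, ← mul_assoc]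
    exact arrangementA_mul_prefixReversal_mul_rotate_pow hσ hτ hA hK' hp
end

section
/- For every n ≥ 7, the arrangement B_n can be transformed into the arrangement C_n = (2, 3, …, n−1, n, 1) in exactly (3n² − 38n + 128)/8 LRE moves when n is even, and in exactly (3n² − 32n + 93)/8 LRE moves when n is odd; that is, there exist that many generators g_1, g_2, … ∈ G with B_n ∘ g_1 ∘ ⋯ = C_n. -/
/-!
Positions are 0-based. Conjugating the exchange τ by σ^k swaps positions k and k + 1, so the
word σ^j (τσ⁻¹)^j τ of 3j + 1 moves is the cycle sending position 0 to j + 1 and shifting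
positions 1, …, j + 1 down by one. Appending these cycles for j = 0, …, m - 1 to the word σ
gives a word with product σ ∘ ρ, where ρ reverses positions 0, …, m; for m = ⌈n/2⌉ - 3 this
is B_n⁻¹ C_n. The word has 1 + ∑_{j<m} (3j + 1) moves, which is the stated count.
-/

section Words

variable {M : Type*}

def cycleWord (s t r : M) : ℕ → List M
  | 0 => [t]
  | j + 1 => s :: (cycleWord s t r j ++ [r, t])

def reversalWord (s t r : M) : ℕ → List M
  | 0 => [s]
  | j + 1 => reversalWord s t r j ++ cycleWord s t r j

theorem length_cycleWord (s t r : M) (j : ℕ) : (cycleWord s t r j).length = 3 * j + 1 := by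
  induction j with
  | zero => rfl
  | succ j ih => simp [cycleWord, ih]; omega

theorem two_mul_length_reversalWord_add (s t r : M) (j : ℕ) :
    2 * (reversalWord s t r j).length + j = 3 * j ^ 2 + 2 := by
  induction j with
  | zero => rfl
  | succ j ih => simp only [reversalWord, List.length_append, length_cycleWord]; nlinarith

theorem eq_or_eq_or_eq_of_mem_cycleWord {s t r g : M} {j : ℕ} (hg : g ∈ cycleWord s t r j) :
    g = s ∨ g = r ∨ g = t := by
  induction j with
  | zero => simp_all [cycleWord]
  | succ j ih => simp only [cycleWord, List.mem_cons, List.mem_append] at hg; aesop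

theorem eq_or_eq_or_eq_of_mem_reversalWord {s t r g : M} {j : ℕ}
    (hg : g ∈ reversalWord s t r j) : g = s ∨ g = r ∨ g = t := by
  induction j with
  | zero => simp_all [reversalWord]
  | succ j ih =>
    simp only [reversalWord, List.mem_append] at hg
    exact hg.elim ih eq_or_eq_or_eq_of_mem_cycleWord

theorem prod_cycleWord [Monoid M] (s t r : M) (j : ℕ) :
    (cycleWord s t r j).prod = s ^ j * (t * r) ^ j * t := by
  induction j with
  | zero => simp [cycleWord]
  | succ j ih => simp [cycleWord, ih, pow_succ' s, pow_succ (t * r), mul_assoc]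

theorem prod_cycleWord_succ [Group M] (s t : M) (j : ℕ) :
    (cycleWord s t s⁻¹ (j + 1)).prod =
      s ^ (j + 1) * t * (s ^ (j + 1))⁻¹ * (cycleWord s t s⁻¹ j).prod := by
  rw [prod_cycleWord, prod_cycleWord, pow_succ' (t * s⁻¹) j, pow_succ s j, mul_inv_rev]
  simp [mul_assoc]

end Words

theorem add_one_mod_eq_ite {a n : ℕ} (h : a < n) :
    (a + 1) % n = if a + 1 = n then 0 else a + 1 := by
  split_ifs with h'
  · rw [h', Nat.mod_self]
  · exact Nat.mod_eq_of_lt (by omega)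

section Rotation

variable {n : ℕ} {σ τ : Equiv.Perm (Fin n)}

def IsLeftRotation (σ : Equiv.Perm (Fin n)) : Prop :=
  ∀ i : Fin n, (σ i : ℕ) = ((i : ℕ) + 1) % n

def IsExchange (τ : Equiv.Perm (Fin n)) : Prop :=
  ∀ i : Fin n, (τ i : ℕ) = if (i : ℕ) = 0 then 1 else if (i : ℕ) = 1 then 0 else (i : ℕ)

theorem IsLeftRotation.val_pow_apply (hσ : IsLeftRotation σ) (j : ℕ) (i : Fin n) :
    ((σ ^ j) i : ℕ) = ((i : ℕ) + j) % n := by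
  induction j generalizing i with
  | zero => simp [Nat.mod_eq_of_lt i.isLt]
  | succ j ih =>
    rw [pow_succ, Equiv.Perm.mul_apply, ih, hσ, Nat.mod_add_mod, Nat.add_right_comm, add_assoc]

theorem IsExchange.eq_swap (hτ : IsExchange τ) (hn : 2 ≤ n) :
    τ = Equiv.swap ⟨0, by omega⟩ ⟨1, hn⟩ := by
  ext i
  rw [hτ, Equiv.swap_apply_def]
  split_ifs <;> simp_all [Fin.ext_iff]

theorem IsExchange.conj_pow_eq_swap (hτ : IsExchange τ) (hσ : IsLeftRotation σ) {k : ℕ}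
    (hk : k + 1 < n) : σ ^ k * τ * (σ ^ k)⁻¹ = Equiv.swap ⟨k, by omega⟩ ⟨k + 1, hk⟩ := by
  rw [hτ.eq_swap (by omega), ← Equiv.swap_apply_apply]
  congr 1 <;> ext <;> simp only [hσ.val_pow_apply] <;> rw [Nat.mod_eq_of_lt] <;> omega

theorem val_prod_cycleWord_apply (hσ : IsLeftRotation σ) (hτ : IsExchange τ) {j : ℕ}
    (hj : j + 2 ≤ n) (x : Fin n) : ((cycleWord σ τ σ⁻¹ j).prod x : ℕ) =
      if (x : ℕ) = 0 then j + 1 else if (x : ℕ) ≤ j + 1 then x - 1 else x := by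
  induction j generalizing x with
  | zero => simp only [cycleWord, List.prod_singleton, hτ x]; split_ifs <;> omega
  | succ j ih =>
    rw [prod_cycleWord_succ, hτ.conj_pow_eq_swap hσ hj, Equiv.Perm.mul_apply,
      Equiv.swap_apply_def]
    simp only [apply_ite Fin.val, Fin.ext_iff, ih (by omega) x]
    split_ifs <;> omega

theorem val_prod_reversalWord_apply (hσ : IsLeftRotation σ) (hτ : IsExchange τ) {j : ℕ}
    (hj : j + 2 ≤ n) (x : Fin n) : ((reversalWord σ τ σ⁻¹ j).prod x : ℕ) =
      if (x : ℕ) ≤ j then j + 1 - x else if (x : ℕ) = n - 1 then 0 else x + 1 := by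
  induction j generalizing x with
  | zero =>
    rw [reversalWord, List.prod_singleton, hσ, add_one_mod_eq_ite x.isLt]
    split_ifs <;> omega
  | succ j ih =>
    rw [reversalWord, List.prod_append, Equiv.Perm.mul_apply, ih (by omega),
      val_prod_cycleWord_apply hσ hτ (by omega)]
    split_ifs <;> omega

end Rotation

/-- For every `n ≥ 7`, the arrangement `B_n` can be transformed into the arrangement
`C_n = (2, 3, …, n, 1)` in exactly `(3n² - 38n + 128)/8` LRE moves when `n` is even and
`(3n² - 32n + 93)/8` moves when `n` is odd (the counts `k = gs.length` are expressed by
the equivalent subtraction-free equations `8k + 38n = 3n² + 128` and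
`8k + 32n = 3n² + 93`).  Permutations of `{1,…,n}` are modelled as `Equiv.Perm (Fin n)`
with `i : Fin n` representing the 1-based index `(i : ℕ) + 1`: `σ` is the left-rotation,
`τ` the transposition of the first two positions; with `c = ⌈n/2⌉ = (n+1)/2`, `B = B_n`
satisfies `B(1) = 1`, `B(i) = c + 1 - i` for `2 ≤ i ≤ c - 1`, `B(i) = i` for
`c ≤ i ≤ n`; and `C = C_n` satisfies `C(i) = i + 1` for `i < n`, `C(n) = 1`.
A move multiplies on the right by an element of `G = {σ, σ⁻¹, τ}`. -/
theorem B_to_C (n : ℕ) (hn : 7 ≤ n)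
    (σ τ B C : Equiv.Perm (Fin n))
    (hσ : ∀ i : Fin n, (σ i : ℕ) = ((i : ℕ) + 1) % n)
    (hτ : ∀ i : Fin n, (τ i : ℕ) =
      if (i : ℕ) = 0 then 1 else if (i : ℕ) = 1 then 0 else (i : ℕ))
    (hB : ∀ i : Fin n, (B i : ℕ) =
      if (i : ℕ) = 0 then 0
      else if (i : ℕ) < (n + 1) / 2 - 1 then (n + 1) / 2 - 1 - (i : ℕ)
      else (i : ℕ))
    (hC : ∀ i : Fin n, (C i : ℕ) = ((i : ℕ) + 1) % n) :
    ∃ gs : List (Equiv.Perm (Fin n)),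
      (n % 2 = 0 → 8 * gs.length + 38 * n = 3 * n ^ 2 + 128) ∧
      (n % 2 = 1 → 8 * gs.length + 32 * n = 3 * n ^ 2 + 93) ∧
      (∀ g ∈ gs, g = σ ∨ g = σ⁻¹ ∨ g = τ) ∧
      B * gs.prod = C := by
  obtain ⟨m, hm⟩ : ∃ m, m = (n + 1) / 2 - 3 := ⟨_, rfl⟩
  have hlen := two_mul_length_reversalWord_add σ τ σ⁻¹ m
  refine ⟨reversalWord σ τ σ⁻¹ m, fun _ => ?_, fun _ => ?_,
    fun _ hg => eq_or_eq_or_eq_of_mem_reversalWord hg, ?_⟩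
  · obtain rfl : n = 2 * m + 6 := by omega
    nlinarith
  · obtain rfl : n = 2 * m + 5 := by omega
    nlinarith
  · ext x
    rw [Equiv.Perm.mul_apply, hB, hC, val_prod_reversalWord_apply hσ hτ (by omega),
      add_one_mod_eq_ite x.isLt]
    split_ifs <;> omega
end

section
/- For every even n ≥ 8, the reverse permutation R_n can be sorted with LRE in exactly (3n² − 20n + 72)/4 moves; that is, R_n is a product of (3n² − 20n + 72)/4 elements of G. -/
/-!
Work with positions `0, …, n-1`; write `σ` for the left rotation, `τ` for the exchange and `ρ_L`
for the reversal of the first `L` positions. For `n = 2m` the reverse permutation is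
`ρ_m σ^m ρ_m`. Reversals grow two at a time, `ρ_{L+2} = (0 L+1) σ ρ_L σ⁻¹`, and the
transposition `(0 k+1)` is the conjugate of `τ = (0 1)` by `(τσ)^k`, the rotation of
`1, …, n-1`; as a word this is `τ (στ)^k (σ⁻¹τ)^k`, of length `4k + 1`. Carrying a factor
`σ^⌊(L-2)/2⌋` along, the `σ⁻¹` of one step cancels the `σ` of the next, so `ρ_L σ^⌊(L-2)/2⌋`
is a word of length `L² - L - 1` and the reverse permutation one of length `2m² - m - 2`.
That falls short of `(3n² - 20n + 72)/4` by `(m-4)(m-5)`, an even number, made up by pairs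
`σ σ⁻¹`.
-/

open Equiv Pointwise

theorem Set.mul_mem_pow_add_s7 {M : Type*} [Monoid M] {S : Set M} {a b : M} {k l : ℕ}
    (ha : a ∈ S ^ k) (hb : b ∈ S ^ l) : a * b ∈ S ^ (k + l) := by
  rw [pow_add]
  exact Set.mul_mem_mul ha hb

theorem Set.exists_list_of_mem_pow {M : Type*} [Monoid M] {S : Set M} {g : M} {k : ℕ}
    (hg : g ∈ S ^ k) : ∃ l : List M, l.length = k ∧ (∀ x ∈ l, x ∈ S) ∧ l.prod = g := by
  obtain ⟨f, hf⟩ := Set.mem_pow.1 hg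
  refine ⟨List.ofFn fun i ↦ (f i : M), List.length_ofFn, ?_, hf⟩
  simp only [List.mem_ofFn]
  rintro _ ⟨i, rfl⟩
  exact (f i).2

section Group

variable {G : Type*} [Group G] {S : Set G} {σ τ g : G}

theorem mem_pow_two_mul_add {k : ℕ} (hσ : σ ∈ S) (hσ' : σ⁻¹ ∈ S) (hg : g ∈ S ^ k) (p : ℕ) :
    g ∈ S ^ (2 * p + k) := by
  have hone : (1 : G) ∈ S ^ (2 * p) := by
    rw [pow_mul, sq, ← one_pow p, ← mul_inv_cancel σ]
    exact Set.pow_mem_pow (Set.mul_mem_mul hσ hσ')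
  simpa using Set.mul_mem_pow_add_s7 hone hg

theorem mul_pow_mul_inv_mul_pow_eq_conj (hτ : τ * τ = 1) (k : ℕ) :
    τ * (σ * τ) ^ k * (σ⁻¹ * τ) ^ k = (τ * σ) ^ k * τ * ((τ * σ) ^ k)⁻¹ := by
  have hτinv : τ⁻¹ = τ := inv_eq_of_mul_eq_one_right hτ
  have hsemiconj : SemiconjBy τ (σ * τ) (τ * σ) := (mul_assoc τ σ τ).symm
  rw [(hsemiconj.pow_right k).eq, ← inv_pow, mul_inv_rev, hτinv]

theorem mul_pow_mul_inv_mul_pow_mem_pow (hσ : σ ∈ S) (hσ' : σ⁻¹ ∈ S) (hτ : τ ∈ S) (k : ℕ) :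
    τ * (σ * τ) ^ k * (σ⁻¹ * τ) ^ k ∈ S ^ (4 * k + 1) := by
  rw [show 4 * k + 1 = 1 + 2 * k + 2 * k by ring, pow_add, pow_add, pow_one, pow_mul, sq]
  exact Set.mul_mem_mul (Set.mul_mem_mul hτ (Set.pow_mem_pow (Set.mul_mem_mul hσ hτ)))
    (Set.pow_mem_pow (Set.mul_mem_mul hσ' hτ))

end Group

namespace Fin

variable {n : ℕ}

theorem val_finRotate (i : Fin n) : (finRotate n i : ℕ) = (i + 1) % n := by
  have := i.neZero
  rw [finRotate_apply, Fin.val_add, Fin.val_one', Nat.add_mod_mod]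

theorem val_finRotate_eq_ite (i : Fin n) :
    (finRotate n i : ℕ) = if (i : ℕ) + 1 = n then 0 else (i : ℕ) + 1 := by
  rw [val_finRotate]
  split_ifs with h
  · rw [h, Nat.mod_self]
  · exact Nat.mod_eq_of_lt (by omega)

theorem val_finRotate_pow (k : ℕ) (i : Fin n) : ((finRotate n ^ k) i : ℕ) = (i + k) % n := by
  induction k with
  | zero => simp [Nat.mod_eq_of_lt i.isLt]
  | succ k ih => rw [pow_succ', Perm.mul_apply, val_finRotate, ih, Nat.mod_add_mod, add_assoc]

theorem val_swap_apply (a b i : Fin n) :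
    (swap a b i : ℕ) = if (i : ℕ) = a then (b : ℕ) else if (i : ℕ) = b then (a : ℕ) else i := by
  simp only [swap_apply_def, Fin.ext_iff]
  split_ifs <;> rfl

/-- The reversal of the first `L` positions (the identity when `L > n`). -/
def revPrefix (L : ℕ) : Perm (Fin n) :=
  Function.Involutive.toPerm
    (fun i ↦ if h : (i : ℕ) < L ∧ L ≤ n then ⟨L - 1 - i, by omega⟩ else i)
    fun i ↦ by
      ext
      dsimp only
      split_ifs <;> simp only at * <;> omega

theorem val_revPrefix (L : ℕ) (i : Fin n) :
    (revPrefix L i : ℕ) = if (i : ℕ) < L ∧ L ≤ n then L - 1 - i else i := by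
  change ((if h : (i : ℕ) < L ∧ L ≤ n then ⟨L - 1 - i, by omega⟩ else i : Fin n) : ℕ) = _
  split_ifs <;> rfl

theorem revPrefix_eq_one {L : ℕ} (hL : L ≤ 1) : revPrefix L = (1 : Perm (Fin n)) := by
  ext i
  rw [val_revPrefix, Perm.one_apply]
  split_ifs <;> omega

theorem revPrefix_add_two {L : ℕ} (hL : L + 2 ≤ n) :
    revPrefix (L + 2) =
      swap ⟨0, by omega⟩ ⟨L + 1, by omega⟩ * finRotate n * revPrefix L * (finRotate n)⁻¹ := by
  rw [eq_mul_inv_iff_mul_eq]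
  ext i
  simp only [Perm.mul_apply, val_revPrefix, val_swap_apply, val_finRotate_eq_ite, hL,
    (by omega : L ≤ n), and_true]
  grind

theorem revPrefix_mul_finRotate_pow_mul_revPrefix {m : ℕ} (hm : n = m + m) :
    revPrefix m * finRotate n ^ m * revPrefix m = revPerm := by
  ext i
  have hmod : ∀ x < n, (x + m) % n = if x < m then x + m else x - m := by
    intro x hx
    split_ifs with h
    · exact Nat.mod_eq_of_lt (by omega)
    · rw [Nat.mod_eq_sub_mod (by omega), Nat.mod_eq_of_lt (by omega)]
      omega
  simp only [Perm.mul_apply, val_revPrefix, val_finRotate_pow, revPerm_apply, val_rev]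
  rw [hmod _ (by grind)]
  grind

end Fin

namespace LRE

open Fin

variable {n : ℕ}

/-- The paper's generator set `G = {σ, σ⁻¹, τ}`. -/
def moves (n : ℕ) : Set (Perm (Fin (n + 2))) :=
  {finRotate (n + 2), (finRotate (n + 2))⁻¹, swap 0 1}

theorem swap_mul_finRotate_pow_apply_zero (k : ℕ) :
    ((swap (0 : Fin (n + 2)) 1 * finRotate (n + 2)) ^ k) 0 = 0 :=
  Perm.pow_apply_eq_self_of_apply_eq_self (by simp) k

theorem swap_mul_finRotate_pow_apply_one {k : ℕ} (hk : k ≤ n) :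
    ((swap (0 : Fin (n + 2)) 1 * finRotate (n + 2)) ^ k) 1 = ⟨k + 1, by omega⟩ := by
  induction k with
  | zero => rfl
  | succ k ih =>
    rw [pow_succ', Perm.mul_apply, ih (by omega)]
    ext
    simp only [Perm.mul_apply, val_swap_apply, val_finRotate_eq_ite, Fin.val_zero, Fin.val_one]
    grind

theorem swap_mul_pow_mul_inv_mul_pow_eq_swap {k : ℕ} (hk : k ≤ n) :
    swap 0 1 * (finRotate (n + 2) * swap 0 1) ^ k * ((finRotate (n + 2))⁻¹ * swap 0 1) ^ k =
      swap 0 ⟨k + 1, by omega⟩ := by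
  rw [mul_pow_mul_inv_mul_pow_eq_conj (swap_mul_self 0 1), ← swap_apply_apply,
    swap_mul_finRotate_pow_apply_zero, swap_mul_finRotate_pow_apply_one hk]

theorem revPrefix_add_two_eq_mul {L : ℕ} (hL : L ≤ n) :
    revPrefix (L + 2) = swap 0 1 * (finRotate (n + 2) * swap 0 1) ^ L *
      ((finRotate (n + 2))⁻¹ * swap 0 1) ^ L * finRotate (n + 2) * revPrefix L *
      (finRotate (n + 2))⁻¹ := by
  rw [swap_mul_pow_mul_inv_mul_pow_eq_swap hL]
  exact revPrefix_add_two (by omega)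

theorem finRotate_mem_moves : finRotate (n + 2) ∈ moves n := by simp [moves]

theorem finRotate_inv_mem_moves : (finRotate (n + 2))⁻¹ ∈ moves n := by simp [moves]

theorem swap_mem_moves : swap 0 1 ∈ moves n := by simp [moves]

theorem revPrefix_mul_finRotate_pow_mem {j : ℕ} (hj : j ≤ n) :
    revPrefix (j + 2) * finRotate (n + 2) ^ (j / 2) ∈ moves n ^ (j ^ 2 + 3 * j + 1) := by
  have hill := mul_pow_mul_inv_mul_pow_mem_pow (finRotate_mem_moves (n := n))
    finRotate_inv_mem_moves swap_mem_moves
  induction j using Nat.twoStepInduction with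
  | zero =>
    rw [revPrefix_add_two_eq_mul hj, revPrefix_eq_one zero_le_one]
    simpa using hill 0
  | one =>
    rw [revPrefix_add_two_eq_mul hj, revPrefix_eq_one le_rfl]
    simpa using hill 1
  | more j ih _ =>
    have hσ : finRotate (n + 2) ∈ moves n ^ 1 := by rw [pow_one]; exact finRotate_mem_moves
    have h := Set.mul_mem_pow_add_s7 (Set.mul_mem_pow_add_s7 (hill (j + 2)) hσ) (ih (by omega))
    rw [show (j + 2) ^ 2 + 3 * (j + 2) + 1 = 4 * (j + 2) + 1 + 1 + (j ^ 2 + 3 * j + 1) by ring,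
      revPrefix_add_two_eq_mul hj, show (j + 2) / 2 = j / 2 + 1 by omega,
      pow_succ' (finRotate (n + 2))]
    convert h using 1
    simp only [mul_assoc, inv_mul_cancel_left]

theorem revPerm_mem_moves_pow {j : ℕ} (hn : n + 2 = (j + 2) + (j + 2)) :
    (revPerm : Perm (Fin (n + 2))) ∈ moves n ^ (2 * j ^ 2 + 7 * j + 4) := by
  have hrev := revPrefix_mul_finRotate_pow_mem (n := n) (j := j) (by omega)
  have hsplit : (revPerm : Perm (Fin (n + 2))) =
      revPrefix (j + 2) * finRotate (n + 2) ^ (j / 2) * finRotate (n + 2) ^ (j + 2 - j / 2) *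
        (revPrefix (j + 2) * finRotate (n + 2) ^ (j / 2)) * (finRotate (n + 2))⁻¹ ^ (j / 2) := by
    rw [← revPrefix_mul_finRotate_pow_mul_revPrefix hn,
      ← pow_mul_pow_sub (finRotate _) (show j / 2 ≤ j + 2 by omega)]
    simp only [mul_assoc, inv_pow, mul_inv_cancel, mul_one]
  rw [hsplit, show 2 * j ^ 2 + 7 * j + 4 =
    j ^ 2 + 3 * j + 1 + (j + 2 - j / 2) + (j ^ 2 + 3 * j + 1) + j / 2 by ring_nf; omega]
  exact Set.mul_mem_pow_add_s7 (Set.mul_mem_pow_add_s7 (Set.mul_mem_pow_add_s7 hrev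
    (Set.pow_mem_pow finRotate_mem_moves)) hrev) (Set.pow_mem_pow finRotate_inv_mem_moves)

end LRE

/-- For every even `n ≥ 8`, the reverse permutation `R_n` can be sorted with LRE in
exactly `(3n² - 20n + 72)/4` moves, i.e. `R_n` is a product of that many elements of
`G = {σ, σ⁻¹, τ}` (the count `k = gs.length` is expressed by the equivalent
subtraction-free equation `4k + 20n = 3n² + 72`).  Permutations of `{1,…,n}` are modelled
as `Equiv.Perm (Fin n)` with `i : Fin n` representing the 1-based index `(i : ℕ) + 1`:
`σ` is the left-rotation, `τ` the transposition of the first two positions, and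
`R = R_n` sends `i ↦ n + 1 - i`. -/
theorem sort_reverse_even (n : ℕ) (hn : 8 ≤ n) (heven : n % 2 = 0)
    (σ τ R : Equiv.Perm (Fin n))
    (hσ : ∀ i : Fin n, (σ i : ℕ) = ((i : ℕ) + 1) % n)
    (hτ : ∀ i : Fin n, (τ i : ℕ) =
      if (i : ℕ) = 0 then 1 else if (i : ℕ) = 1 then 0 else (i : ℕ))
    (hR : ∀ i : Fin n, (R i : ℕ) = n - 1 - (i : ℕ)) :
    ∃ gs : List (Equiv.Perm (Fin n)),
      4 * gs.length + 20 * n = 3 * n ^ 2 + 72 ∧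
      (∀ g ∈ gs, g = σ ∨ g = σ⁻¹ ∨ g = τ) ∧
      gs.prod = R := by
  obtain ⟨i, rfl⟩ : ∃ i, n = 2 * i + 6 + 2 := ⟨n / 2 - 4, by omega⟩
  obtain rfl : σ = finRotate _ := Equiv.ext fun x ↦ Fin.ext <| by rw [hσ, Fin.val_finRotate]
  obtain rfl : τ = swap 0 1 := Equiv.ext fun x ↦ Fin.ext <| by
    rw [hτ, Fin.val_swap_apply, Fin.val_zero, Fin.val_one]
  obtain rfl : R = Fin.revPerm := Equiv.ext fun x ↦ Fin.ext <| by
    rw [hR, Fin.revPerm_apply, Fin.val_rev]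
    omega
  obtain ⟨p, hp⟩ : ∃ p, 2 * p + i = i * i := by
    obtain ⟨r, hr⟩ := Nat.even_mul_pred_self i
    exact ⟨r, by rw [Nat.mul_sub_one] at hr; have := Nat.le_mul_self i; omega⟩
  obtain ⟨gs, hlen, hmem, hprod⟩ := Set.exists_list_of_mem_pow <|
    mem_pow_two_mul_add LRE.finRotate_mem_moves LRE.finRotate_inv_mem_moves
      (LRE.revPerm_mem_moves_pow (n := 2 * i + 6) (j := i + 2) (by omega)) p
  refine ⟨gs, ?_, fun g hg ↦ by simpa [LRE.moves] using hmem g hg, hprod⟩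
  rw [hlen]
  have : (2 * i + 6 + 2) ^ 2 = 4 * (i * i) + 32 * i + 64 := by ring
  have : (i + 2) ^ 2 = i * i + 4 * i + 4 := by ring
  omega
end

section
/- For every odd n ≥ 9, the reverse permutation R_n can be sorted with LRE in exactly (3n² − 20n + 73)/4 moves; that is, R_n is a product of (3n² − 20n + 73)/4 elements of G. -/
namespace LRE

def revbFun (n a b : ℕ) : Fin n → Fin n := fun i =>
  if h : a ≤ i.val ∧ i.val ≤ b ∧ b < n then
    ⟨a + b - i.val, by omega⟩ else i

lemma revbFun_invol (n a b : ℕ) : Function.Involutive (revbFun n a b) := by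
  intro i
  unfold revbFun
  split_ifs with h1 h2
  · apply Fin.ext; simp only []; omega
  · exfalso; apply h2; simp only []; omega
  · rfl

/-- reversal of the block `[a,b]` of `Fin n`, identity elsewhere. -/
def revb (n a b : ℕ) : Equiv.Perm (Fin n) :=
  Function.Involutive.toPerm (revbFun n a b) (revbFun_invol n a b)

lemma revb_apply {n : ℕ} (a b : ℕ) (hb : b < n) (i : Fin n) :
    (revb n a b i).val = if a ≤ i.val ∧ i.val ≤ b then a + b - i.val else i.val := by
  simp only [revb, Function.Involutive.coe_toPerm, revbFun]
  split_ifs with h1 h2 h3 <;> first | rfl | omega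

lemma revb_trivial {n : ℕ} {a b : ℕ} (h : b ≤ a) : revb n a b = 1 := by
  apply Equiv.ext
  intro i
  simp only [revb, Function.Involutive.coe_toPerm, revbFun, Equiv.Perm.coe_one, id]
  split_ifs with h1
  · apply Fin.ext; simp only []; omega
  · rfl

lemma revb_mul_self {n : ℕ} (a b : ℕ) : revb n a b * revb n a b = 1 := by
  apply Equiv.ext
  intro i
  rw [Equiv.Perm.mul_apply]
  exact revbFun_invol n a b i

end LRE

namespace LRE

variable {n : ℕ}

lemma sigma_pow_apply (σ : Equiv.Perm (Fin n))
    (hσ : ∀ i : Fin n, (σ i : ℕ) = ((i : ℕ) + 1) % n) :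
    ∀ (k : ℕ) (x : Fin n), ((σ ^ k) x : ℕ) = ((x : ℕ) + k) % n := by
  intro k
  induction k with
  | zero => intro x; simp [Nat.mod_eq_of_lt x.isLt]
  | succ k ih =>
    intro x
    rw [pow_succ, Equiv.Perm.mul_apply, ih (σ x), hσ x, Nat.mod_add_mod]
    ring_nf

/-- conjugation of a block reversal by a rotation (no wrap-around). -/
lemma sigma_pow_revb (σ : Equiv.Perm (Fin n))
    (hσ : ∀ i : Fin n, (σ i : ℕ) = ((i : ℕ) + 1) % n)
    (d a b : ℕ) (hbd : b + d < n) :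
    σ ^ d * revb n a b = revb n (a + d) (b + d) * σ ^ d := by
  apply Equiv.ext
  intro x
  apply Fin.ext
  rw [Equiv.Perm.mul_apply, Equiv.Perm.mul_apply,
      sigma_pow_apply σ hσ d (revb n a b x),
      revb_apply (a+d) (b+d) hbd, sigma_pow_apply σ hσ d x,
      revb_apply a b (by omega) x]
  have hx := x.isLt
  by_cases hw : (x : ℕ) + d < n
  · rw [Nat.mod_eq_of_lt hw]
    split_ifs with h1 h2
    · rw [Nat.mod_eq_of_lt (by omega)]; omega
    · exact (h2 ⟨by omega, by omega⟩).elim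
    · rename_i h3; exact absurd ⟨by omega, by omega⟩ h1
    · rw [Nat.mod_eq_of_lt hw]
  · have h1 : ((x : ℕ) + d) % n = (x : ℕ) + d - n := by
      rw [Nat.mod_eq_sub_mod (by omega), Nat.mod_eq_of_lt (by omega)]
    rw [h1]
    split_ifs with h2 h3
    · omega
    · exact (h3 ⟨by omega, by omega⟩).elim
    · omega
    · rw [Nat.mod_eq_sub_mod (by omega), Nat.mod_eq_of_lt (by omega)]

end LRE

namespace LRE

variable {n : ℕ}

lemma revb_apply' (a b : ℕ) (i : Fin n) :
    (revb n a b i).val =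
      if a ≤ i.val ∧ i.val ≤ b ∧ b < n then a + b - i.val else i.val := by
  simp only [revb, Function.Involutive.coe_toPerm, revbFun]
  split_ifs <;> rfl

lemma identity1 (a b : ℕ) (hab : a ≤ b) (hb : b + 1 < n) :
    revb n a b * revb n a (b-1) * revb n b (b+1) = revb n a (b+1) * revb n a b := by
  apply Equiv.ext; intro x; apply Fin.ext
  simp only [Equiv.Perm.mul_apply, revb_apply']
  split_ifs <;> omega

lemma identity2 (x c : ℕ) (hxc : x + 1 ≤ c) (hc : c < n) :
    revb n (x+1) (c-1) * revb n (x+1) c * revb n x (x+1) =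
      revb n x (c-1) * revb n x c := by
  apply Equiv.ext; intro i; apply Fin.ext
  simp only [Equiv.Perm.mul_apply, revb_apply']
  split_ifs <;> omega

lemma identity3 (x c : ℕ) (hxc : x ≤ c) (hc : c < n) :
    revb n x (c-1) * revb n x c * revb n (x+1) c = revb n x c := by
  apply Equiv.ext; intro i; apply Fin.ext
  simp only [Equiv.Perm.mul_apply, revb_apply']
  split_ifs <;> omega

lemma identity4 (b : ℕ) (hb1 : 1 ≤ b) (hb : b < n) :
    revb n 0 1 * revb n 1 b * revb n 1 (b-1) = revb n 0 b * revb n 0 (b-1) := by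
  apply Equiv.ext; intro i; apply Fin.ext
  simp only [Equiv.Perm.mul_apply, revb_apply']
  split_ifs <;> omega

end LRE

namespace LRE

variable {n : ℕ}

/-- boustrophedon word: `L` decreasing alternating sweeps. -/
def Gw {α : Type*} (a b c : α) : ℕ → Bool → List α
  | 0, _ => []
  | (L+1), u => (List.replicate (L+1) (if u then [a, c] else [b, c])).flatten
      ++ Gw a b c L (!u)

lemma Gw_length {α : Type*} (a b c : α) : ∀ (L : ℕ) (u : Bool),
    (Gw a b c L u).length = L * (L + 1) := by
  intro L
  induction L with
  | zero => intro u; rfl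
  | succ L ih =>
    intro u
    simp only [Gw, List.length_append, ih, List.length_flatten]
    rcases u <;> simp [List.map_replicate, List.sum_replicate, Nat.succ_eq_add_one] <;> ring

lemma Gw_mem {α : Type*} (a b c : α) : ∀ (L : ℕ) (u : Bool) (g : α),
    g ∈ Gw a b c L u → g = a ∨ g = b ∨ g = c := by
  intro L
  induction L with
  | zero => intro u g h; simp [Gw] at h
  | succ L ih =>
    intro u g h
    simp only [Gw, List.mem_append, List.mem_flatten] at h
    rcases h with ⟨l, hl, hg⟩ | h
    · rw [List.eq_of_mem_replicate hl] at hg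
      rcases u <;> simp at hg <;> tauto
    · exact ih _ _ h

lemma join_replicate_prod {M : Type*} [Monoid M] (x y : M) (L : ℕ) :
    ((List.replicate L [x, y]).flatten).prod = (x * y) ^ L := by
  induction L with
  | zero => simp
  | succ L ih =>
    rw [List.replicate_succ, List.flatten_cons, List.prod_append, ih, pow_succ']
    simp [mul_assoc]

end LRE

namespace LRE

variable {n : ℕ}

lemma asc_pass (σ : Equiv.Perm (Fin n))
    (hσ : ∀ i : Fin n, (σ i : ℕ) = ((i : ℕ) + 1) % n) :
    ∀ L, L + 1 < n →
      (σ * revb n 0 1) ^ L = revb n 1 (L+1) * revb n 1 L * σ ^ L := by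
  intro L
  induction L with
  | zero =>
    intro _
    simp [revb_trivial (le_refl 1), revb_trivial (Nat.zero_le 1)]
  | succ L ih =>
    intro h
    have key : σ ^ (L+1) * revb n 0 1 = revb n (L+1) (L+2) * σ ^ (L+1) := by
      have e : 1 + (L+1) = L + 2 := by omega
      have h2 := sigma_pow_revb σ hσ (L+1) 0 1 (by omega)
      rwa [Nat.zero_add, e] at h2
    have i1 := identity1 (n := n) 1 (L+1) (by omega) (by omega)
    simp only [Nat.add_sub_cancel] at i1
    calc (σ * revb n 0 1) ^ (L+1)
        = (σ * revb n 0 1) ^ L * (σ * revb n 0 1) := pow_succ _ _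
      _ = revb n 1 (L+1) * revb n 1 L * σ ^ L * (σ * revb n 0 1) := by
          rw [ih (by omega)]
      _ = revb n 1 (L+1) * revb n 1 L * (σ ^ (L+1) * revb n 0 1) := by
          rw [pow_succ]; group
      _ = revb n 1 (L+1) * revb n 1 L * (revb n (L+1) (L+2) * σ ^ (L+1)) := by
          rw [key]
      _ = revb n 1 (L+1) * revb n 1 L * revb n (L+1) (L+2) * σ ^ (L+1) := by
          group
      _ = revb n 1 (L+2) * revb n 1 (L+1) * σ ^ (L+1) := by rw [i1]

lemma desc_pass (σ : Equiv.Perm (Fin n))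
    (hσ : ∀ i : Fin n, (σ i : ℕ) = ((i : ℕ) + 1) % n) :
    ∀ L c, L ≤ c → c + 1 < n →
      σ ^ c * (σ⁻¹ * revb n 0 1) ^ L =
        revb n (c-L) (c-1) * revb n (c-L) c * σ ^ (c-L) := by
  intro L
  induction L with
  | zero =>
    intro c _ _
    simp [revb_trivial (Nat.sub_le c 1), revb_trivial (le_refl c)]
  | succ L ih =>
    intro c hLc hc
    have hx : c - L = (c - (L+1)) + 1 := by omega
    have key : σ ^ (c-L-1) * revb n 0 1 = revb n (c-L-1) (c-L) * σ ^ (c-L-1) := by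
      have := sigma_pow_revb σ hσ (c-L-1) 0 1 (by omega)
      have e1 : 0 + (c-L-1) = c-L-1 := by omega
      have e2 : 1 + (c-L-1) = c-L := by omega
      rwa [e1, e2] at this
    have i2 := identity2 (n := n) (c-(L+1)) c (by omega) (by omega)
    have epow : σ ^ (c-L) * σ⁻¹ = σ ^ (c-L-1) := by
      have e4 : c - L = (c-L-1) + 1 := by omega
      conv_lhs => rw [e4, pow_succ]
      rw [mul_inv_cancel_right]
    calc σ ^ c * (σ⁻¹ * revb n 0 1) ^ (L+1)
        = σ ^ c * (σ⁻¹ * revb n 0 1) ^ L * (σ⁻¹ * revb n 0 1) := by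
          rw [pow_succ]; group
      _ = revb n (c-L) (c-1) * revb n (c-L) c * σ ^ (c-L) * (σ⁻¹ * revb n 0 1) := by
          rw [ih c (by omega) hc]
      _ = revb n (c-L) (c-1) * revb n (c-L) c * (σ ^ (c-L) * σ⁻¹ * revb n 0 1) := by
          group
      _ = revb n (c-L) (c-1) * revb n (c-L) c * (σ ^ (c-L-1) * revb n 0 1) := by
          rw [epow]
      _ = revb n (c-L) (c-1) * revb n (c-L) c * (revb n (c-L-1) (c-L) * σ ^ (c-L-1)) := by
          rw [key]
      _ = revb n (c-L) (c-1) * revb n (c-L) c * revb n (c-L-1) (c-L) * σ ^ (c-L-1) := by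
          group
      _ = revb n (c-(L+1)) (c-1) * revb n (c-(L+1)) c * σ ^ (c-(L+1)) := by
          have e3 : c - L - 1 = c - (L+1) := by omega
          rw [e3, hx, i2]

end LRE

namespace LRE

variable {n : ℕ}

lemma gw_prods (σ : Equiv.Perm (Fin n))
    (hσ : ∀ i : Fin n, (σ i : ℕ) = ((i : ℕ) + 1) % n) :
    ∀ L,
      (L + 1 < n →
        (Gw σ σ⁻¹ (revb n 0 1) L true).prod = revb n 1 (L+1) * σ ^ ((L+1)/2)) ∧
      (∀ c, L ≤ c → c + 1 < n →
        σ ^ c * (Gw σ σ⁻¹ (revb n 0 1) L false).prod =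
          revb n (c-L) c * σ ^ (c - (L+1)/2)) := by
  intro L
  induction L with
  | zero =>
    constructor
    · intro _
      simp [Gw, revb_trivial (le_refl 1)]
    · intro c _ _
      simp [Gw, revb_trivial (le_refl c)]
  | succ L ih =>
    constructor
    · -- GA (L+1)
      intro h
      have hGd := ih.2 (L+1) (by omega) (by omega)
      have hasc := asc_pass σ hσ (L+1) (by omega)
      have e1 : (L+1) - L = 1 := by omega
      rw [e1] at hGd
      have e2 : (L+1) - (L+1)/2 = (L+1+1)/2 := by omega
      rw [e2] at hGd
      calc (Gw σ σ⁻¹ (revb n 0 1) (L+1) true).prod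
          = (σ * revb n 0 1) ^ (L+1) * (Gw σ σ⁻¹ (revb n 0 1) L false).prod := by
            rw [show Gw σ σ⁻¹ (revb n 0 1) (L+1) true =
                  (List.replicate (L+1) [σ, revb n 0 1]).flatten ++ Gw σ σ⁻¹ (revb n 0 1) L false from rfl]
            rw [List.prod_append, join_replicate_prod]
        _ = revb n 1 (L+2) * (revb n 1 (L+1) * (σ ^ (L+1) *
              (Gw σ σ⁻¹ (revb n 0 1) L false).prod)) := by
            rw [hasc]; group
        _ = revb n 1 (L+2) * (revb n 1 (L+1) * (revb n 1 (L+1) * σ ^ ((L+1+1)/2))) := by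
            rw [hGd]
        _ = revb n 1 (L+1+1) * σ ^ ((L+1+1)/2) := by
            rw [← mul_assoc (revb n 1 (L+1)), revb_mul_self, one_mul]
    · -- GD (L+1)
      intro c hLc hc
      have hdesc := desc_pass σ hσ (L+1) c (by omega) (by omega)
      have hGa := ih.1 (by omega)
      have key : σ ^ (c-(L+1)) * revb n 1 (L+1) = revb n (c-L) c * σ ^ (c-(L+1)) := by
        have h2 := sigma_pow_revb σ hσ (c-(L+1)) 1 (L+1) (by omega)
        have e1 : 1 + (c-(L+1)) = c - L := by omega
        have e2 : (L+1) + (c-(L+1)) = c := by omega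
        rwa [e1, e2] at h2
      have i3 := identity3 (n := n) (c-(L+1)) c (by omega) (by omega)
      have e3 : c - (L+1) + 1 = c - L := by omega
      rw [e3] at i3
      have e4 : c - (L+1) + (L+1)/2 = c - (L+1+1)/2 := by omega
      calc σ ^ c * (Gw σ σ⁻¹ (revb n 0 1) (L+1) false).prod
          = σ ^ c * (σ⁻¹ * revb n 0 1) ^ (L+1) *
              (Gw σ σ⁻¹ (revb n 0 1) L true).prod := by
            rw [show Gw σ σ⁻¹ (revb n 0 1) (L+1) false =
                  (List.replicate (L+1) [σ⁻¹, revb n 0 1]).flatten ++ Gw σ σ⁻¹ (revb n 0 1) L true from rfl]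
            rw [List.prod_append, join_replicate_prod]; group
        _ = revb n (c-(L+1)) (c-1) * revb n (c-(L+1)) c *
              (σ ^ (c-(L+1)) * (revb n 1 (L+1) * σ ^ ((L+1)/2))) := by
            rw [hdesc, hGa]; group
        _ = revb n (c-(L+1)) (c-1) * revb n (c-(L+1)) c *
              (revb n (c-L) c * (σ ^ (c-(L+1)) * σ ^ ((L+1)/2))) := by
            rw [← mul_assoc (σ ^ (c-(L+1))), key]; group
        _ = (revb n (c-(L+1)) (c-1) * revb n (c-(L+1)) c * revb n (c-L) c) *
              σ ^ (c - (L+1+1)/2) := by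
            rw [← pow_add, e4]; group
        _ = revb n (c-(L+1)) c * σ ^ (c - (L+1+1)/2) := by rw [i3]

end LRE

namespace LRE

lemma identity5 {n m : ℕ} (hm : n = 2*m+1) (hm1 : 1 ≤ m)
    (σ R : Equiv.Perm (Fin n))
    (hσ : ∀ i : Fin n, (σ i : ℕ) = ((i : ℕ) + 1) % n)
    (hR : ∀ i : Fin n, (R i : ℕ) = n - 1 - (i : ℕ)) :
    revb n 0 (m-1) * revb n m (2*m) * σ ^ m = R := by
  apply Equiv.ext; intro i; apply Fin.ext
  rw [Equiv.Perm.mul_apply, Equiv.Perm.mul_apply, hR i]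
  have hx := i.isLt
  by_cases hw : (i : ℕ) + m < n
  · have h1 : ((σ ^ m) i : ℕ) = (i : ℕ) + m := by
      rw [sigma_pow_apply σ hσ m i, Nat.mod_eq_of_lt hw]
    have h2 : ((revb n m (2*m)) ((σ ^ m) i) : ℕ) =
        if m ≤ (i:ℕ)+m ∧ (i:ℕ)+m ≤ 2*m ∧ 2*m < n then m + 2*m - ((i:ℕ)+m)
        else (i:ℕ)+m := by rw [revb_apply', h1]
    have h3 := revb_apply' (n := n) 0 (m-1) ((revb n m (2*m)) ((σ ^ m) i))
    rw [h3, h2]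
    split_ifs <;> omega
  · have h1 : ((σ ^ m) i : ℕ) = (i : ℕ) + m - n := by
      rw [sigma_pow_apply σ hσ m i, Nat.mod_eq_sub_mod (by omega),
          Nat.mod_eq_of_lt (by omega)]
    have h2 : ((revb n m (2*m)) ((σ ^ m) i) : ℕ) =
        if m ≤ (i:ℕ)+m-n ∧ (i:ℕ)+m-n ≤ 2*m ∧ 2*m < n then m + 2*m - ((i:ℕ)+m-n)
        else (i:ℕ)+m-n := by rw [revb_apply', h1]
    have h3 := revb_apply' (n := n) 0 (m-1) ((revb n m (2*m)) ((σ ^ m) i))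
    rw [h3, h2]
    split_ifs <;> omega

end LRE


namespace LRE

lemma count_arith (n m c2 j : ℕ) (hm : n = 2*m+1) (h4 : 4 ≤ m)
    (hc2 : c2 = (m+1)/2) (hj : j = (m-4)*(m-4)/2) :
    4*((2*(m-2)+1) + (m-2)*((m-2)+1) + c2 + m*(m+1) + (c2-1) + 2*j) + 20*n
      = 3*n^2+73 := by
  subst hm hc2 hj
  obtain ⟨b, rfl⟩ : ∃ b, m = b + 4 := ⟨m - 4, by omega⟩
  rcases Nat.even_or_odd b with ⟨c, rfl⟩ | ⟨c, rfl⟩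
  · rw [show c+c+4-2 = c+c+2 by omega, show c+c+4-4 = c+c by omega,
      show (c+c+4+1)/2 = c+2 by omega,
      show (c+c)*(c+c)/2 = 2*(c*c) by
        rw [show (c+c)*(c+c) = 2*(c*c)*2 by ring, Nat.mul_div_cancel _ two_pos],
      show c+2-1 = c+1 by omega]
    ring
  · rw [show 2*c+1+4-2 = 2*c+3 by omega, show 2*c+1+4-4 = 2*c+1 by omega,
      show (2*c+1+4+1)/2 = c+3 by omega,
      show (2*c+1)*(2*c+1)/2 = 2*(c*c)+2*c by
        rw [show (2*c+1)*(2*c+1) = 2*(2*(c*c)+2*c)+1 by ring,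
          Nat.mul_add_div two_pos]
        rfl,
      show c+3-1 = c+2 by omega]
    ring

end LRE

open LRE

/-- For every odd `n ≥ 9`, the reverse permutation `R_n` can be sorted with LRE in
exactly `(3n² - 20n + 73)/4` moves, i.e. `R_n` is a product of that many elements of
`G = {σ, σ⁻¹, τ}` (the count `k = gs.length` is expressed by the equivalent
subtraction-free equation `4k + 20n = 3n² + 73`).  Permutations of `{1,…,n}` are modelled
as `Equiv.Perm (Fin n)` with `i : Fin n` representing the 1-based index `(i : ℕ) + 1`:
`σ` is the left-rotation, `τ` the transposition of the first two positions, and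
`R = R_n` sends `i ↦ n + 1 - i`. -/
theorem sort_reverse_odd (n : ℕ) (hn : 9 ≤ n) (hodd : n % 2 = 1)
    (σ τ R : Equiv.Perm (Fin n))
    (hσ : ∀ i : Fin n, (σ i : ℕ) = ((i : ℕ) + 1) % n)
    (hτ : ∀ i : Fin n, (τ i : ℕ) =
      if (i : ℕ) = 0 then 1 else if (i : ℕ) = 1 then 0 else (i : ℕ))
    (hR : ∀ i : Fin n, (R i : ℕ) = n - 1 - (i : ℕ)) :
    ∃ gs : List (Equiv.Perm (Fin n)),
      4 * gs.length + 20 * n = 3 * n ^ 2 + 73 ∧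
      (∀ g ∈ gs, g = σ ∨ g = σ⁻¹ ∨ g = τ) ∧
      gs.prod = R := by
  obtain ⟨m, hm⟩ : ∃ m, n = 2 * m + 1 := ⟨(n-1)/2, by omega⟩
  have hm4 : 4 ≤ m := by omega
  have hτ2 : τ = revb n 0 1 := by
    apply Equiv.ext; intro i; apply Fin.ext
    rw [hτ i, revb_apply']
    have := i.isLt
    split_ifs <;> omega
  refine ⟨(τ :: (List.replicate (m-2) [σ, τ]).flatten) ++
      Gw σ σ⁻¹ τ (m-2) false ++ List.replicate ((m+1)/2) σ ++
      Gw σ σ⁻¹ τ m true ++ List.replicate ((m+1)/2-1) σ⁻¹ ++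
      List.replicate (2*((m-4)*(m-4)/2)) τ, ?_, ?_, ?_⟩
  · -- length
    have hlen : ((τ :: (List.replicate (m-2) [σ, τ]).flatten) ++
        Gw σ σ⁻¹ τ (m-2) false ++ List.replicate ((m+1)/2) σ ++
        Gw σ σ⁻¹ τ m true ++ List.replicate ((m+1)/2-1) σ⁻¹ ++
        List.replicate (2*((m-4)*(m-4)/2)) τ).length =
        (2*(m-2)+1) + (m-2)*((m-2)+1) + (m+1)/2 + m*(m+1) + ((m+1)/2-1)
          + 2*((m-4)*(m-4)/2) := by
      simp only [List.length_append, List.length_cons, List.length_replicate,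
        Gw_length, List.length_flatten, List.map_replicate, List.sum_replicate,
        smul_eq_mul, List.length_nil]
      ring_nf
    rw [hlen]
    exact count_arith n m ((m+1)/2) ((m-4)*(m-4)/2) hm hm4 rfl rfl
  · -- membership
    intro g hg
    simp only [List.mem_append, List.mem_cons, List.mem_flatten,
      List.mem_replicate] at hg
    rcases hg with ((((h | h) | h) | h) | h) | h
    · rcases h with h | ⟨l, hl, hgl⟩
      · right; right; exact h
      · rw [hl.2] at hgl
        simp only [List.mem_cons, List.mem_singleton] at hgl
        rcases hgl with h | h
        · left; exact h
        · right; right; simp at h; exact h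
    · exact Gw_mem _ _ _ _ _ _ h
    · left; exact h.2
    · exact Gw_mem _ _ _ _ _ _ h
    · right; left; exact h.2
    · right; right; exact h.2
  · -- product
    rw [hτ2]
    simp only [List.prod_append, List.prod_cons, List.prod_replicate]
    rw [join_replicate_prod]
    -- abbreviations
    have hasc := asc_pass σ hσ (m-2) (by omega)
    rw [show m-2+1 = m-1 by omega] at hasc
    have hi4 := identity4 (n := n) (m-1) (by omega) (by omega)
    rw [show m-1-1 = m-2 by omega] at hi4
    have hgd := (gw_prods σ hσ (m-2)).2 (m-2) le_rfl (by omega)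
    rw [Nat.sub_self, show m-2+1 = m-1 by omega] at hgd
    have hga := (gw_prods σ hσ m).1 (by omega)
    have hconj : σ^(m-1) * revb n 1 (m+1) = revb n m (2*m) * σ^(m-1) := by
      have h2 := sigma_pow_revb σ hσ (m-1) 1 (m+1) (by omega)
      rwa [show 1+(m-1) = m by omega, show (m+1)+(m-1) = 2*m by omega] at h2
    have hpad : (revb n 0 1)^(2*((m-4)*(m-4)/2)) = 1 := by
      rw [pow_mul, show (revb n 0 1)^2 = 1 by rw [pow_two]; exact revb_mul_self 0 1,
        one_pow]
    have B1 : revb n 0 1 * (σ * revb n 0 1)^(m-2) *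
        (Gw σ σ⁻¹ (revb n 0 1) (m-2) false).prod =
        revb n 0 (m-1) * σ^((m-2) - (m-1)/2) := by
      rw [hasc]
      calc revb n 0 1 * (revb n 1 (m-1) * revb n 1 (m-2) * σ^(m-2)) *
            (Gw σ σ⁻¹ (revb n 0 1) (m-2) false).prod
          = (revb n 0 1 * revb n 1 (m-1) * revb n 1 (m-2)) *
              (σ^(m-2) * (Gw σ σ⁻¹ (revb n 0 1) (m-2) false).prod) := by group
        _ = (revb n 0 (m-1) * revb n 0 (m-2)) *
              (revb n 0 (m-2) * σ^((m-2) - (m-1)/2)) := by rw [hi4, hgd]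
        _ = revb n 0 (m-1) * (revb n 0 (m-2) * revb n 0 (m-2)) *
              σ^((m-2) - (m-1)/2) := by group
        _ = revb n 0 (m-1) * σ^((m-2) - (m-1)/2) := by
              rw [revb_mul_self, mul_one]
    calc revb n 0 1 * (σ * revb n 0 1)^(m-2) *
          (Gw σ σ⁻¹ (revb n 0 1) (m-2) false).prod * σ^((m+1)/2) *
          (Gw σ σ⁻¹ (revb n 0 1) m true).prod * (σ⁻¹)^((m+1)/2-1) *
          (revb n 0 1)^(2*((m-4)*(m-4)/2))
        = revb n 0 (m-1) * σ^((m-2) - (m-1)/2) * σ^((m+1)/2) *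
            (revb n 1 (m+1) * σ^((m+1)/2)) * (σ⁻¹)^((m+1)/2-1) * 1 := by
          rw [B1, hga, hpad]
      _ = revb n 0 (m-1) * (σ^((m-2) - (m-1)/2) * σ^((m+1)/2) * revb n 1 (m+1)) *
            (σ^((m+1)/2) * (σ⁻¹)^((m+1)/2-1)) := by
          group
      _ = revb n 0 (m-1) * (σ^(m-1) * revb n 1 (m+1)) *
            (σ^((m+1)/2) * (σ⁻¹)^((m+1)/2-1)) := by
          rw [← pow_add, show (m-2) - (m-1)/2 + (m+1)/2 = m-1 by omega]
      _ = revb n 0 (m-1) * (revb n m (2*m) * σ^(m-1)) *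
            (σ^((m+1)/2) * (σ⁻¹)^((m+1)/2-1)) := by rw [hconj]
      _ = revb n 0 (m-1) * revb n m (2*m) *
            (σ^(m-1) * σ^((m+1)/2) * (σ⁻¹)^((m+1)/2-1)) := by
          group
      _ = revb n 0 (m-1) * revb n m (2*m) * σ^m := by
          rw [← pow_add, show m-1+(m+1)/2 = m + ((m+1)/2-1) by omega, pow_add,
            inv_pow, mul_inv_cancel_right]
      _ = R := identity5 hm (by omega) σ R hσ hR
end

section
/- For every n ≥ 3, the minimum number of LRE moves needed to sort the reverse permutation R_n is at most 3n²/4; that is, there exists k with 4k ≤ 3n² such that R_n is a product of k elements of G. -/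
/-!
Write `σ` for the rotation, `τ` for the exchange and `V_L` for the reversal of the first `L`
positions. Conjugating the transposition `(0 l)` by `τσ` gives `(0 (l+1))`, so `(0 (l+1))` costs
at most `4l + 1` moves. Conjugating `V_L` by `σ` moves it to positions `1, …, L`, and composing
with `(0 (L+1))` gives `V_{L+2}`; hence `V_L` costs at most `L²` moves. Read cyclically,
reversing the arc `[0, 2t)` and the complementary arc `[2t, n)` reverses the whole circle up to
rotation: `R_n = σ⁻ᵗ V_{2t} σ^{2t} V_{n-2t} σ⁻ᵗ`, which costs at most `4t + (2t)² + (n - 2t)²`,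
at most `3n²/4` for `t = ⌊n/4⌋` once `n ≥ 4`. Finally `R₃ = στ`.
-/

open Equiv

section WordLength

variable {M : Type*} [Monoid M]

def WordLengthLE (S : Set M) (x : M) (k : ℕ) : Prop :=
  ∃ gs : List M, gs.length ≤ k ∧ (∀ g ∈ gs, g ∈ S) ∧ gs.prod = x

namespace WordLengthLE

variable {S : Set M} {x y : M} {k l : ℕ}

theorem one : WordLengthLE S 1 0 := ⟨[], le_rfl, by simp, rfl⟩

theorem of_mem (h : x ∈ S) : WordLengthLE S x 1 := ⟨[x], le_rfl, by simpa, by simp⟩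

theorem mono (hx : WordLengthLE S x k) (hkl : k ≤ l) : WordLengthLE S x l :=
  let ⟨gs, hlen, hS, hprod⟩ := hx
  ⟨gs, hlen.trans hkl, hS, hprod⟩

theorem mul (hx : WordLengthLE S x k) (hy : WordLengthLE S y l) :
    WordLengthLE S (x * y) (k + l) := by
  obtain ⟨gs, hlen, hS, rfl⟩ := hx
  obtain ⟨hs, hlen', hS', rfl⟩ := hy
  refine ⟨gs ++ hs, by simp only [List.length_append]; omega, ?_, List.prod_append⟩
  simpa [List.mem_append, or_imp, forall_and] using ⟨hS, hS'⟩

theorem pow_of_mem (h : x ∈ S) (k : ℕ) : WordLengthLE S (x ^ k) k :=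
  ⟨List.replicate k x, (List.length_replicate ..).le,
    fun _ hg => List.eq_of_mem_replicate hg ▸ h, List.prod_replicate k x⟩

end WordLengthLE

end WordLength

section

variable {n : ℕ}

theorem val_finRotate_apply (i : Fin n) :
    (finRotate n i : ℕ) = if (i : ℕ) + 1 = n then 0 else (i : ℕ) + 1 := by
  cases n with
  | zero => exact i.elim0
  | succ n => simp only [coe_finRotate, Fin.ext_iff, Fin.val_last, Nat.add_right_cancel_iff]

theorem val_finRotate_pow_apply {k : ℕ} (hk : k ≤ n) (i : Fin n) :
    ((finRotate n ^ k) i : ℕ) = if (i : ℕ) + k < n then i + k else i + k - n := by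
  induction k with
  | zero => simp [i.isLt]
  | succ k ih =>
    rw [pow_succ', Perm.mul_apply, val_finRotate_apply, ih (by omega)]
    split_ifs <;> omega

theorem val_finRotate_inv_pow_apply {k : ℕ} (hk : k ≤ n) (i : Fin n) :
    (((finRotate n)⁻¹ ^ k) i : ℕ) = if k ≤ (i : ℕ) then i - k else i + n - k := by
  set j := ((finRotate n)⁻¹ ^ k) i
  have h := val_finRotate_pow_apply hk j
  rw [show (finRotate n ^ k) j = i by simp [j, inv_pow]] at h
  have := j.isLt
  split_ifs at h ⊢ <;> omega

def prefixRev (L : ℕ) (hL : L ≤ n) : Perm (Fin n) :=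
  Fin.revPerm.viaFintypeEmbedding (Fin.castLEEmb hL)

theorem val_prefixRev_apply {L : ℕ} (hL : L ≤ n) (i : Fin n) :
    (prefixRev L hL i : ℕ) = if (i : ℕ) < L then L - 1 - i else i := by
  split_ifs with hi
  · have : i = Fin.castLEEmb hL ⟨i, hi⟩ := rfl
    rw [prefixRev, this, Perm.viaFintypeEmbedding_apply_image]
    simp only [Fin.castLEEmb_apply, Fin.val_castLE, Fin.revPerm_apply, Fin.val_rev]
    omega
  · rw [prefixRev, Perm.viaFintypeEmbedding_apply_notMem_range]
    rintro ⟨j, rfl⟩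
    exact hi j.isLt

theorem prefixRev_eq_one {L : ℕ} (hL : L ≤ n) (h1 : L ≤ 1) : prefixRev L hL = 1 := by
  ext i
  rw [val_prefixRev_apply, Perm.one_apply]
  split_ifs <;> omega

theorem revPerm_eq_prefixRev_mul_prefixRev {t : ℕ} (ht : 2 * t ≤ n) :
    Fin.revPerm = (finRotate n)⁻¹ ^ t * prefixRev (2 * t) ht * finRotate n ^ (2 * t) *
      prefixRev (n - 2 * t) (Nat.sub_le n _) * (finRotate n)⁻¹ ^ t := by
  ext i
  simp only [Perm.mul_apply, Fin.revPerm_apply, Fin.val_rev, val_prefixRev_apply,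
    val_finRotate_pow_apply ht, val_finRotate_inv_pow_apply (n := n) (k := t) (by omega)]
  have := i.isLt
  split_ifs <;> omega

end

/-- The LRE moves `σ`, `σ⁻¹`, `τ` on `n + 2` positions, indexed from `0`. -/
def lreMoves (n : ℕ) : Set (Perm (Fin (n + 2))) := {finRotate _, (finRotate _)⁻¹, swap 0 1}

section LREMoves

variable {n : ℕ}

theorem finRotate_mem_lreMoves : finRotate _ ∈ lreMoves n := by simp [lreMoves]

theorem inv_finRotate_mem_lreMoves : (finRotate _)⁻¹ ∈ lreMoves n := by simp [lreMoves]

theorem swap_zero_one_mem_lreMoves : swap 0 1 ∈ lreMoves n := by simp [lreMoves]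

theorem swap_zero_add_two {l : ℕ} (hl : l + 2 < n + 2) :
    swap 0 ⟨l + 2, hl⟩ =
      swap 0 1 * finRotate _ * swap 0 ⟨l + 1, by omega⟩ * (finRotate _)⁻¹ * swap 0 1 := by
  have h0 : finRotate (n + 2) 0 = 1 := finRotate_apply_zero
  have hl' : finRotate (n + 2) ⟨l + 1, by omega⟩ = ⟨l + 2, hl⟩ := finRotate_of_lt (by omega)
  have h1 : swap (0 : Fin (n + 2)) 1 ⟨l + 2, hl⟩ = ⟨l + 2, hl⟩ :=
    swap_apply_of_ne_of_ne (by simp [Fin.ext_iff]) (by simp [Fin.ext_iff])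
  have hconj : swap 1 ⟨l + 2, hl⟩ = finRotate _ * swap 0 ⟨l + 1, by omega⟩ * (finRotate _)⁻¹ := by
    rw [← swap_apply_apply, h0, hl']
  calc swap 0 ⟨l + 2, hl⟩ = swap (swap (0 : Fin (n + 2)) 1 1) (swap 0 1 ⟨l + 2, hl⟩) := by
        rw [swap_apply_right, h1]
    _ = swap 0 1 * swap 1 ⟨l + 2, hl⟩ * (swap 0 1)⁻¹ := swap_apply_apply ..
    _ = _ := by rw [hconj, swap_inv]; simp only [mul_assoc]

theorem prefixRev_add_two {L : ℕ} (hL : L + 2 ≤ n + 2) :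
    prefixRev (L + 2) hL =
      swap 0 ⟨L + 1, by omega⟩ * finRotate _ * prefixRev L (by omega) * (finRotate _)⁻¹ := by
  ext i
  have hinv := val_finRotate_inv_pow_apply (n := n + 2) (k := 1) (by omega)
  simp only [pow_one] at hinv
  simp only [Perm.mul_apply, swap_apply_def, Fin.ext_iff, apply_ite Fin.val, val_prefixRev_apply,
    val_finRotate_apply, hinv, Fin.val_zero]
  have := i.isLt
  split_ifs <;> first | omega | contradiction

theorem wordLengthLE_swap_zero {l : ℕ} (hl : l + 1 < n + 2) :
    WordLengthLE (lreMoves n) (swap 0 ⟨l + 1, hl⟩) (4 * l + 1) := by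
  induction l with
  | zero => exact .of_mem swap_zero_one_mem_lreMoves
  | succ l ih =>
    rw [swap_zero_add_two hl]
    exact (((((WordLengthLE.of_mem swap_zero_one_mem_lreMoves).mul
      (.of_mem finRotate_mem_lreMoves)).mul (ih (by omega))).mul
      (.of_mem inv_finRotate_mem_lreMoves)).mul (.of_mem swap_zero_one_mem_lreMoves)).mono
      (by omega)

theorem wordLengthLE_prefixRev {L : ℕ} (hL : L ≤ n + 2) :
    WordLengthLE (lreMoves n) (prefixRev L hL) (L ^ 2) := by
  induction L using Nat.twoStepInduction with
  | zero => rw [prefixRev_eq_one hL zero_le_one]; exact .one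
  | one => rw [prefixRev_eq_one hL le_rfl]; exact WordLengthLE.one.mono zero_le_one
  | more L ih _ =>
    rw [prefixRev_add_two hL]
    exact ((((wordLengthLE_swap_zero _).mul (.of_mem finRotate_mem_lreMoves)).mul
      (ih (by omega))).mul (.of_mem inv_finRotate_mem_lreMoves)).mono (by nlinarith)

end LREMoves

theorem four_mul_sum_le_three_mul_sq {n : ℕ} (hn : 4 ≤ n) :
    4 * (n / 4 + (2 * (n / 4)) ^ 2 + 2 * (n / 4) + (n - 2 * (n / 4)) ^ 2 + n / 4) ≤ 3 * n ^ 2 := by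
  obtain ⟨t, r, hr, rfl⟩ : ∃ t r, r < 4 ∧ n = 4 * t + r :=
    ⟨n / 4, n % 4, Nat.mod_lt _ (by omega), (Nat.div_add_mod n 4).symm⟩
  have ht : (4 * t + r) / 4 = t := by omega
  have ht1 : 1 ≤ t := by omega
  rw [ht, show 4 * t + r - 2 * t = 2 * t + r by omega]
  nlinarith

theorem revPerm_three : (Fin.revPerm : Perm (Fin 3)) = finRotate 3 * swap 0 1 := by decide

theorem exists_wordLengthLE_revPerm {n : ℕ} (hn : 1 ≤ n) :
    ∃ k, 4 * k ≤ 3 * (n + 2) ^ 2 ∧ WordLengthLE (lreMoves n) Fin.revPerm k := by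
  obtain rfl | hn := (by omega : n = 1 ∨ 2 ≤ n)
  · refine ⟨2, by norm_num, ?_⟩
    rw [revPerm_three]
    exact (WordLengthLE.of_mem finRotate_mem_lreMoves).mul (.of_mem swap_zero_one_mem_lreMoves)
  · refine ⟨_, four_mul_sum_le_three_mul_sq (by omega), ?_⟩
    rw [revPerm_eq_prefixRev_mul_prefixRev (t := (n + 2) / 4) (by omega)]
    exact (((((WordLengthLE.pow_of_mem inv_finRotate_mem_lreMoves _).mul
      (wordLengthLE_prefixRev _)).mul (.pow_of_mem finRotate_mem_lreMoves _)).mul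
      (wordLengthLE_prefixRev _)).mul (.pow_of_mem inv_finRotate_mem_lreMoves _))

/-- For every `n ≥ 3`, the minimum number of LRE moves needed to sort the reverse
permutation `R_n` is at most `3n²/4`: there is a `k` with `4k ≤ 3n²` such that `R_n` is
a product of `k` elements of `G = {σ, σ⁻¹, τ}`.  Permutations of `{1,…,n}` are modelled
as `Equiv.Perm (Fin n)` with `i : Fin n` representing the 1-based index `(i : ℕ) + 1`:
`σ` is the left-rotation, `τ` the transposition of the first two positions, and
`R = R_n` sends `i ↦ n + 1 - i`. -/
theorem sort_reverse_upper_bound_tight (n : ℕ) (hn : 3 ≤ n)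
    (σ τ R : Equiv.Perm (Fin n))
    (hσ : ∀ i : Fin n, (σ i : ℕ) = ((i : ℕ) + 1) % n)
    (hτ : ∀ i : Fin n, (τ i : ℕ) =
      if (i : ℕ) = 0 then 1 else if (i : ℕ) = 1 then 0 else (i : ℕ))
    (hR : ∀ i : Fin n, (R i : ℕ) = n - 1 - (i : ℕ)) :
    ∃ k : ℕ, 4 * k ≤ 3 * n ^ 2 ∧
      ∃ gs : List (Equiv.Perm (Fin n)),
        gs.length = k ∧
        (∀ g ∈ gs, g = σ ∨ g = σ⁻¹ ∨ g = τ) ∧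
        gs.prod = R := by
  obtain ⟨m, rfl⟩ : ∃ m, n = m + 2 := ⟨n - 2, by omega⟩
  obtain rfl : σ = finRotate _ := by
    ext i
    rw [hσ, finRotate_apply, Fin.val_add, Fin.val_one]
  obtain rfl : τ = swap 0 1 := by
    ext i
    rw [hτ, swap_apply_def]
    simp only [Fin.ext_iff, apply_ite Fin.val, Fin.val_zero, Fin.val_one]
  obtain rfl : R = Fin.revPerm := by
    ext i
    rw [hR, Fin.revPerm_apply, Fin.val_rev]
    omega
  obtain ⟨k, hk, gs, hlen, hgs, hprod⟩ := exists_wordLengthLE_revPerm (n := m) (by omega)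
  exact ⟨gs.length, (Nat.mul_le_mul_left 4 hlen).trans hk, gs, rfl, hgs, hprod⟩
end
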